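/- arXiv:2010.10449 — 6 statements merged into one kernel-verified Lean document; each statement's English description precedes it below -/
import Mathlib

section
/- Let I=[a,b] be a compact interval, g ∈ C^r(I,ℝ) with r ≥ 1, and C_r := ‖g^{(r)}‖_{L^∞(I)}. Then for every λ with 0 < λ ≤ ‖g‖_∞ there exists a finite family of pairwise disjoint intervals I_{λ,i}, i ∈ 𝓘_λ, such that (i) |𝓘_λ| ≤ 30 r (1 + |I| C_r^{1/r} λ^{-1/r}), and (ii) the union V_λ of the intervals satisfies {t ∈ I : |g(t)| < λ} ⊆ V_λ ⊆ {t ∈ I : |g(t)| < 8λ}. -/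
/-!
On a cell of length `w` with `Cr * w ^ r ≤ λ`, Taylor's theorem gives a polynomial `q` of degree
`< r` with `|g - q| ≤ λ`, so that `{|g| < λ} ⊆ {|q| < 2λ} ⊆ {|g| < 3λ}` on the cell. The roots of
`q ^ 2 - 4λ ^ 2`, at most `2r - 2` of them, cut `{|q| < 2λ}` into at most `2r - 1` intervals, and
`1 + (b - a) Cr^{1/r} λ^{-1/r}` cells suffice to cover `[a, b]`.
-/

open Set Polynomial
open scoped Nat

noncomputable def taylorPolynomialWithin (g : ℝ → ℝ) (n : ℕ) (s : Set ℝ) (c : ℝ) : ℝ[X] :=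
  ∑ k ∈ Finset.range (n + 1), C (iteratedDerivWithin k g s c / k !) * (X - C c) ^ k

section TaylorApproximation

variable {g : ℝ → ℝ} {n : ℕ} {s : Set ℝ} {c : ℝ}

theorem eval_taylorPolynomialWithin (x : ℝ) :
    (taylorPolynomialWithin g n s c).eval x = taylorWithinEval g n s c x := by
  rw [taylorPolynomialWithin, taylor_within_apply, eval_finsetSum]
  refine Finset.sum_congr rfl fun k _ => ?_
  simp only [eval_mul, eval_C, eval_pow, eval_sub, eval_X, smul_eq_mul]
  ring

theorem natDegree_taylorPolynomialWithin_le : (taylorPolynomialWithin g n s c).natDegree ≤ n :=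
  natDegree_sum_le_of_forall_le _ _ fun k hk =>
    (natDegree_C_mul_le _ _).trans <| natDegree_pow_le.trans <| by
      rw [natDegree_X_sub_C, mul_one]
      exact Nat.lt_succ_iff.mp (Finset.mem_range.mp hk)

variable {a b Cr : ℝ}

theorem exists_polynomial_abs_sub_le_on_Icc (hg : ContDiffOn ℝ (n + 1) g (Icc a b))
    (hCr : ∀ t ∈ Icc a b, |iteratedDerivWithin (n + 1) g (Icc a b) t| ≤ Cr)
    {d : ℝ} (hac : a ≤ c) (hcd : c ≤ d) (hdb : d ≤ b) :
    ∃ q : ℝ[X], q.natDegree ≤ n ∧ ∀ x ∈ Icc c d, |g x - q.eval x| ≤ Cr * (d - c) ^ (n + 1) := by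
  rcases hcd.eq_or_lt with rfl | hcd
  · refine ⟨C (g c), by simp, fun x hx => ?_⟩
    obtain rfl : x = c := le_antisymm hx.2 hx.1
    simp
  have hsub : Icc c d ⊆ Icc a b := Icc_subset_Icc hac hdb
  -- On the subinterval the iterated derivatives are the restrictions of those on `[a, b]`.
  have hCr' : ∀ t ∈ Icc c d, ‖iteratedDerivWithin (n + 1) g (Icc c d) t‖ ≤ Cr := fun t ht => by
    rw [iteratedDerivWithin_eq_iteratedFDerivWithin, iteratedFDerivWithin_subset hsub
      (uniqueDiffOn_Icc hcd) (uniqueDiffOn_Icc (hcd.trans_le hdb |>.trans_le' hac)) hg ht,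
      ← iteratedDerivWithin_eq_iteratedFDerivWithin]
    exact hCr t (hsub ht)
  refine ⟨taylorPolynomialWithin g n (Icc c d) c, natDegree_taylorPolynomialWithin_le,
    fun x hx => ?_⟩
  have hCr0 : 0 ≤ Cr := (norm_nonneg _).trans (hCr' x hx)
  rw [eval_taylorPolynomialWithin]
  calc |g x - taylorWithinEval g n (Icc c d) c x|
      ≤ Cr * (x - c) ^ (n + 1) / n ! := taylor_mean_remainder_bound hcd.le (hg.mono hsub) hx hCr'
    _ ≤ Cr * (x - c) ^ (n + 1) := div_le_self (by have := sub_nonneg.2 hx.1; positivity)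
          (by exact_mod_cast n.factorial_pos)
    _ ≤ Cr * (d - c) ^ (n + 1) := by gcongr; exacts [sub_nonneg.2 hx.1, hx.2]

theorem exists_polynomial_abs_sub_le_of_subset (hg : ContDiffOn ℝ (n + 1) g (Icc a b))
    (hCr : ∀ t ∈ Icc a b, |iteratedDerivWithin (n + 1) g (Icc a b) t| ≤ Cr)
    {B : Set ℝ} {w : ℝ} (hBab : B ⊆ Icc a b) (hBc : B ⊆ Icc c (c + w)) :
    ∃ q : ℝ[X], q.natDegree ≤ n ∧ ∀ x ∈ B, |g x - q.eval x| ≤ Cr * w ^ (n + 1) := by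
  rcases B.eq_empty_or_nonempty with rfl | ⟨x₀, hx₀⟩
  · exact ⟨0, by simp, by simp⟩
  have hCr0 : 0 ≤ Cr := (abs_nonneg _).trans (hCr x₀ (hBab hx₀))
  have hlo : max a c ≤ x₀ := max_le (hBab hx₀).1 (hBc hx₀).1
  have hhi : x₀ ≤ min (c + w) b := le_min (hBc hx₀).2 (hBab hx₀).2
  obtain ⟨q, hq, hgq⟩ := exists_polynomial_abs_sub_le_on_Icc hg hCr (le_max_left a c)
    (hlo.trans hhi) (min_le_right _ _)
  refine ⟨q, hq, fun x hx => (hgq x ⟨max_le (hBab hx).1 (hBc hx).1,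
    le_min (hBc hx).2 (hBab hx).2⟩).trans ?_⟩
  gcongr
  · exact sub_nonneg.2 (hlo.trans hhi)
  · linarith [min_le_left (c + w) b, le_max_right a c]

end TaylorApproximation

section ZeroGaps

variable (Z : Finset ℝ)

theorem monotone_card_filter_le : Monotone fun x : ℝ => (Z.filter (· ≤ x)).card :=
  fun _ _ hxy => Finset.card_le_card (Finset.monotone_filter_right _ fun _ _ h => h.trans hxy)

theorem card_filter_le_lt_of_mem {x y u : ℝ} (hu : u ∈ Z) (hxu : x < u) (huy : u ≤ y) :
    (Z.filter (· ≤ x)).card < (Z.filter (· ≤ y)).card := by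
  refine Finset.card_lt_card <| (Finset.ssubset_iff_of_subset
    (Finset.monotone_filter_right _ fun _ _ h => h.trans (hxu.le.trans huy))).2 ⟨u, ?_, ?_⟩
  · exact Finset.mem_filter.2 ⟨hu, huy⟩
  · simpa using fun _ => hxu

end ZeroGaps

theorem exists_ordConnected_cover_of_neg {f : ℝ → ℝ} {B : Set ℝ} (hB : B.OrdConnected)
    (hf : ContinuousOn f B) {Z : Finset ℝ} {m : ℕ} (hZ : Z.card ≤ m)
    (hfZ : ∀ x ∈ B, f x = 0 → x ∈ Z) :
    ∃ J : Fin (m + 1) → Set ℝ, (∀ i, (J i).OrdConnected) ∧ Pairwise (Function.onFun Disjoint J) ∧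
      ⋃ i, J i = {x ∈ B | f x < 0} := by
  -- The `i`-th piece consists of the points of `{f < 0}` with exactly `i` points of `Z` at or
  -- to their left; by the intermediate value theorem it contains no zero of `f` to split it.
  set κ : ℝ → ℕ := fun x => (Z.filter (· ≤ x)).card
  refine ⟨fun i => {x ∈ B | f x < 0} ∩ κ ⁻¹' {(i : ℕ)}, fun i => ⟨?_⟩, ?_, ?_⟩
  · rintro x ⟨⟨hxB, hfx⟩, hκx⟩ y ⟨⟨hyB, hfy⟩, hκy⟩ z hz
    have hzB : z ∈ B := hB.out hxB hyB hz
    have hκz : κ z = i := le_antisymm (hκy ▸ monotone_card_filter_le Z hz.2)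
      (hκx ▸ monotone_card_filter_le Z hz.1)
    refine ⟨⟨hzB, not_le.1 fun hfz => ?_⟩, hκz⟩
    obtain ⟨u, hu, hfu⟩ := intermediate_value_Icc hz.1 (hf.mono (hB.out hxB hzB))
      ⟨hfx.le, hfz⟩
    have hxu : x < u := hu.1.lt_of_ne (by rintro rfl; exact hfx.ne hfu)
    have : κ x < κ y :=
      card_filter_le_lt_of_mem Z (hfZ u (hB.out hxB hzB hu) hfu) hxu (hu.2.trans hz.2)
    simp only [mem_preimage, mem_singleton_iff] at hκx hκy
    omega
  · exact ((pairwise_disjoint_fiber κ).comp_of_injective Fin.val_injective).mono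
      fun _ _ h => h.mono inter_subset_right inter_subset_right
  · refine Subset.antisymm (iUnion_subset fun _ => inter_subset_left) fun x hx => ?_
    exact mem_iUnion.2 ⟨⟨κ x, Nat.lt_succ_of_le ((Finset.card_filter_le _ _).trans hZ)⟩, hx, rfl⟩

theorem Polynomial.exists_ordConnected_cover_abs_eval_lt (q : ℝ[X]) {n : ℕ}
    (hq : q.natDegree ≤ n) {B : Set ℝ} (hB : B.OrdConnected) {μ : ℝ} (hμ : 0 ≤ μ) :
    ∃ J : Fin (2 * n + 1) → Set ℝ, (∀ i, (J i).OrdConnected) ∧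
      Pairwise (Function.onFun Disjoint J) ∧ ⋃ i, J i = {x ∈ B | |q.eval x| < μ} := by
  set p := q ^ 2 - C (μ ^ 2)
  have hset : {x ∈ B | |q.eval x| < μ} = {x ∈ B | p.eval x < 0} := by
    simp only [p, eval_sub, eval_pow, eval_C, sub_neg, sq_lt_sq, abs_of_nonneg hμ]
  rw [hset]
  by_cases hp : p = 0
  · refine ⟨fun _ => ∅, fun _ => ordConnected_empty, fun _ _ _ => empty_disjoint _, ?_⟩
    simp [hp]
  refine exists_ordConnected_cover_of_neg hB p.continuousOn
    ((Multiset.toFinset_card_le _).trans (p.card_roots'.trans ?_)) fun x _ hx => ?_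
  · rw [natDegree_sub_C]
    exact natDegree_pow_le.trans (by omega)
  · exact Multiset.mem_toFinset.2 ((mem_roots hp).2 hx)

theorem Pairwise.disjoint_uncurry {α ι κ : Type*} {B : ι → Set α} {J : ι → κ → Set α}
    (hB : Pairwise (Function.onFun Disjoint B))
    (hJ : ∀ j, Pairwise (Function.onFun Disjoint (J j))) (hJB : ∀ j k, J j k ⊆ B j) :
    Pairwise (Function.onFun Disjoint fun p : ι × κ => J p.1 p.2) := by
  rintro ⟨j, k⟩ ⟨j', k'⟩ hne
  by_cases hj : j = j'
  · subst hj
    exact hJ j fun hk => hne (congrArg _ hk)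
  · exact (hB hj).mono (hJB j k) (hJB j' k')

theorem exists_ordConnected_cover_of_polynomial_approx {g : ℝ → ℝ} {B : Set ℝ}
    (hB : B.OrdConnected) {q : ℝ[X]} {n : ℕ} (hq : q.natDegree ≤ n) {lam : ℝ} (hlam : 0 ≤ lam)
    (hgq : ∀ x ∈ B, |g x - q.eval x| ≤ lam) :
    ∃ J : Fin (2 * n + 1) → Set ℝ, (∀ i, (J i).OrdConnected) ∧
      Pairwise (Function.onFun Disjoint J) ∧
      {x ∈ B | |g x| < lam} ⊆ ⋃ i, J i ∧ ⋃ i, J i ⊆ {x ∈ B | |g x| < 3 * lam} := by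
  obtain ⟨J, hJ, hJd, hJq⟩ :=
    q.exists_ordConnected_cover_abs_eval_lt hq hB (by positivity : 0 ≤ 2 * lam)
  refine ⟨J, hJ, hJd, ?_, ?_⟩ <;> rw [hJq]
  · rintro x ⟨hxB, hgx⟩
    have := abs_sub_abs_le_abs_sub (q.eval x) (g x)
    exact ⟨hxB, by linarith [abs_sub_comm (g x) (q.eval x), hgq x hxB]⟩
  · rintro x ⟨hxB, hqx⟩
    exact ⟨hxB, by linarith [abs_sub_abs_le_abs_sub (g x) (q.eval x), hgq x hxB]⟩

theorem exists_ordConnected_cover_of_piecewise_polynomial_approx {ι : Type*} {g : ℝ → ℝ}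
    {B : ι → Set ℝ} (hB : ∀ j, (B j).OrdConnected) (hBd : Pairwise (Function.onFun Disjoint B))
    {n : ℕ} {lam : ℝ} (hlam : 0 ≤ lam)
    (hgq : ∀ j, ∃ q : ℝ[X], q.natDegree ≤ n ∧ ∀ x ∈ B j, |g x - q.eval x| ≤ lam) :
    ∃ J : ι × Fin (2 * n + 1) → Set ℝ, (∀ k, (J k).OrdConnected) ∧
      Pairwise (Function.onFun Disjoint J) ∧
      {x ∈ ⋃ j, B j | |g x| < lam} ⊆ ⋃ k, J k ∧ ⋃ k, J k ⊆ {x ∈ ⋃ j, B j | |g x| < 3 * lam} := by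
  choose q hq hgq using hgq
  choose J hJ hJd hcov hsub using fun j =>
    exists_ordConnected_cover_of_polynomial_approx (hB j) (hq j) hlam (hgq j)
  have hJB : ∀ j i, J j i ⊆ B j := fun j i x hx => (hsub j (mem_iUnion_of_mem i hx)).1
  refine ⟨fun k => J k.1 k.2, fun k => hJ k.1 k.2, hBd.disjoint_uncurry hJd hJB, ?_, ?_⟩
  · rintro x ⟨hx, hgx⟩
    obtain ⟨j, hxj⟩ := mem_iUnion.1 hx
    obtain ⟨i, hxi⟩ := mem_iUnion.1 (hcov j ⟨hxj, hgx⟩)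
    exact mem_iUnion.2 ⟨(j, i), hxi⟩
  · rintro x hx
    obtain ⟨⟨j, i⟩, hxk⟩ := mem_iUnion.1 hx
    obtain ⟨hxj, hgx⟩ := hsub j (mem_iUnion_of_mem i hxk)
    exact ⟨mem_iUnion_of_mem j hxj, hgx⟩

/-- The points of `[a, b]` in the cell `[a + j w, a + (j + 1) w)` of the grid of mesh `w`. -/
def gridCell (a b w : ℝ) (j : ℕ) : Set ℝ :=
  {x ∈ Icc a b | ⌊(x - a) / w⌋₊ = j}

section GridCell

variable {a b w : ℝ}

theorem ordConnected_gridCell (hw : 0 ≤ w) (j : ℕ) : (gridCell a b w j).OrdConnected :=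
  ordConnected_Icc.inter <| ordConnected_singleton.preimage_mono fun _ _ hxy =>
    Nat.floor_mono (div_le_div_of_nonneg_right (sub_le_sub_right hxy a) hw)

theorem pairwise_disjoint_gridCell : Pairwise (Function.onFun Disjoint (gridCell a b w)) :=
  (pairwise_disjoint_fiber _).mono fun _ _ h => h.mono inter_subset_right inter_subset_right

variable {N : ℕ} (hw : 0 ≤ w) (hN : b - a ≤ N * w)
include hw hN

theorem iUnion_gridCell : ⋃ j : Fin (N + 1), gridCell a b w j = Icc a b := by
  refine Subset.antisymm (iUnion_subset fun _ => inter_subset_left) fun x hx => ?_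
  have hj : ⌊(x - a) / w⌋₊ < N + 1 :=
    Nat.lt_succ_of_le <| Nat.floor_le_of_le <|
      div_le_of_le_mul₀ hw N.cast_nonneg (by linarith [hx.2])
  exact mem_iUnion.2 ⟨⟨_, hj⟩, hx, rfl⟩

theorem gridCell_subset_Icc (j : ℕ) : gridCell a b w j ⊆ Icc (a + j * w) (a + j * w + w) := by
  rintro x ⟨hx, rfl⟩
  rcases hw.eq_or_lt with rfl | hw
  · simp only [div_zero, Nat.floor_zero, CharP.cast_eq_zero, mul_zero, add_zero, mem_Icc]
    constructor <;> linarith [hx.1, hx.2]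
  have hxa : 0 ≤ (x - a) / w := div_nonneg (sub_nonneg.2 hx.1) hw.le
  constructor
  · linarith [(le_div_iff₀ hw).1 (Nat.floor_le hxa)]
  · linarith [(div_lt_iff₀ hw).1 (Nat.lt_floor_add_one ((x - a) / w))]

end GridCell

theorem mul_pow_le_of_mul_rpow_le_one {Cr lam w : ℝ} {r : ℕ} (hr : r ≠ 0) (hCr : 0 ≤ Cr)
    (hlam : 0 < lam) (hw : 0 ≤ w) (h : w * Cr ^ ((1 : ℝ) / r) * lam ^ (-(1 : ℝ) / r) ≤ 1) :
    Cr * w ^ r ≤ lam := by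
  have hu : (Cr ^ ((1 : ℝ) / r)) ^ r = Cr := by
    rw [one_div, Real.rpow_inv_natCast_pow hCr hr]
  have hv : (lam ^ (-(1 : ℝ) / r)) ^ r = lam⁻¹ := by
    rw [neg_div, Real.rpow_neg hlam.le, inv_pow, one_div, Real.rpow_inv_natCast_pow hlam.le hr]
  have := pow_le_one₀ (by positivity) h (n := r)
  rwa [mul_pow, mul_pow, hu, hv, ← div_eq_mul_inv, div_le_one hlam, mul_comm] at this

theorem exists_mesh_mul_pow_le {a b Cr lam : ℝ} {r : ℕ} (hab : a ≤ b) (hr : r ≠ 0)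
    (hCr : 0 ≤ Cr) (hlam : 0 < lam) :
    ∃ (N : ℕ) (w : ℝ), 0 ≤ w ∧ b - a ≤ N * w ∧ Cr * w ^ r ≤ lam ∧
      (N : ℝ) ≤ 1 + (b - a) * Cr ^ ((1 : ℝ) / r) * lam ^ (-(1 : ℝ) / r) := by
  set X := (b - a) * Cr ^ ((1 : ℝ) / r) * lam ^ (-(1 : ℝ) / r)
  have hX : 0 ≤ X := by have := sub_nonneg.2 hab; positivity
  set N := ⌊X⌋₊ + 1
  have hN : (0 : ℝ) < N := by positivity
  have hw : 0 ≤ (b - a) / N := div_nonneg (sub_nonneg.2 hab) hN.le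
  refine ⟨N, (b - a) / N, hw, (mul_div_cancel₀ _ hN.ne').ge, ?_, ?_⟩
  · refine mul_pow_le_of_mul_rpow_le_one hr hCr hlam hw ?_
    calc (b - a) / N * Cr ^ ((1 : ℝ) / r) * lam ^ (-(1 : ℝ) / r) = X / N := by ring
      _ ≤ 1 := div_le_one_of_le₀ (by simpa [N] using (Nat.lt_floor_add_one X).le) hN.le
  · push_cast [N]
    linarith [Nat.floor_le hX]

theorem sublevel_set_decomposition_general
    (a b : ℝ) (hab : a ≤ b) (r : ℕ) (hr : 1 ≤ r)
    (g : ℝ → ℝ) (hg : ContDiffOn ℝ r g (Icc a b))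
    (Cr : ℝ) (hCr : ∀ t ∈ Icc a b, |iteratedDerivWithin r g (Icc a b) t| ≤ Cr)
    (lam : ℝ) (hlam : 0 < lam) :
    ∃ (n : ℕ) (J : Fin n → Set ℝ),
      (∀ i, (J i).OrdConnected) ∧
      Pairwise (Function.onFun Disjoint J) ∧
      ((n : ℝ) ≤ 30 * r * (1 + (b - a) * Cr ^ ((1 : ℝ) / r) * lam ^ (-(1 : ℝ) / r))) ∧
      {t ∈ Icc a b | |g t| < lam} ⊆ (⋃ i, J i) ∧
      (⋃ i, J i) ⊆ {t ∈ Icc a b | |g t| < 8 * lam} := by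
  obtain ⟨n, rfl⟩ : ∃ n, r = n + 1 := ⟨r - 1, by omega⟩
  have hCr0 : 0 ≤ Cr := (abs_nonneg _).trans (hCr a ⟨le_rfl, hab⟩)
  obtain ⟨N, w, hw, hNw, hmesh, hN⟩ := exists_mesh_mul_pow_le hab n.add_one_ne_zero hCr0 hlam
  have happrox (j : Fin (N + 1)) : ∃ q : ℝ[X], q.natDegree ≤ n ∧
      ∀ x ∈ gridCell a b w j, |g x - q.eval x| ≤ lam :=
    (exists_polynomial_abs_sub_le_of_subset hg hCr (fun _ hx => hx.1)
      (gridCell_subset_Icc hw hNw j)).imp fun _ h => ⟨h.1, fun x hx => (h.2 x hx).trans hmesh⟩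
  obtain ⟨J, hJ, hJd, hcov, hsub⟩ :=
    exists_ordConnected_cover_of_piecewise_polynomial_approx
      (B := fun j : Fin (N + 1) => gridCell a b w j) (ordConnected_gridCell hw ·)
      (pairwise_disjoint_gridCell.comp_of_injective Fin.val_injective) hlam.le happrox
  rw [iUnion_gridCell hw hNw] at hcov hsub
  refine ⟨(N + 1) * (2 * n + 1), J ∘ finProdFinEquiv.symm, fun k => hJ _,
    hJd.comp_of_injective finProdFinEquiv.symm.injective, ?_, ?_, ?_⟩
  · have hX : 0 ≤ (b - a) * Cr ^ ((1 : ℝ) / ↑(n + 1)) * lam ^ (-(1 : ℝ) / ↑(n + 1)) := by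
      have := sub_nonneg.2 hab; positivity
    push_cast at hN hX ⊢
    nlinarith
  · simpa only [Function.comp_apply, finProdFinEquiv.symm.surjective.iUnion_comp] using hcov
  · rw [Function.comp_def, finProdFinEquiv.symm.surjective.iUnion_comp]
    exact hsub.trans fun x hx => ⟨hx.1, by linarith [hx.2]⟩

/-- Sublevel-set decomposition: the sublevel set `{|g| < λ}` of a `C^r` function on a
compact interval can be covered by at most `30 r (1 + |I| C_r^{1/r} λ^{-1/r})` pairwise
disjoint intervals on which `|g| < 8λ`. -/
theorem sublevel_set_decomposition
    (a b : ℝ) (hab : a ≤ b) (r : ℕ) (hr : 1 ≤ r)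
    (g : ℝ → ℝ) (hg : ContDiffOn ℝ r g (Icc a b))
    (Cr : ℝ) (hCr : ∀ t ∈ Icc a b, |iteratedDerivWithin r g (Icc a b) t| ≤ Cr)
    (lam : ℝ) (hlam : 0 < lam) (hlam' : ∃ t ∈ Icc a b, lam ≤ |g t|) :
    ∃ (n : ℕ) (J : Fin n → Set ℝ),
      (∀ i, (J i).OrdConnected) ∧
      Pairwise (Function.onFun Disjoint J) ∧
      ((n : ℝ) ≤ 30 * r * (1 + (b - a) * Cr ^ ((1 : ℝ) / r) * lam ^ (-(1 : ℝ) / r))) ∧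
      {t ∈ Icc a b | |g t| < lam} ⊆ (⋃ i, J i) ∧
      (⋃ i, J i) ⊆ {t ∈ Icc a b | |g t| < 8 * lam} :=
  sublevel_set_decomposition_general a b hab r hr g hg Cr hCr lam hlam
end

section
/- Let g ∈ C^k(I,ℝ) on an interval I of length b, with ‖g^{(m)}‖_∞ ≤ c_m for m = 0,…,k and c_0 < 1. Let ε > 0, assume k ≥ 1/ε and b ≤ c_0^ε. Then there exist constants C̃_m(ε) ≥ 0 depending only on ε and c_1,…,c_k (but not on b or c_0) such that ‖g^{(m)}‖_∞ ≤ c_0 · C̃_m(ε) · b^{-m} for all m = 0,…,k. -/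
open Set

/-! Let `F m` stand for `g^{(m)}`, with `|F 0| ≤ A`. Splitting an interval of length `L` into
thirds, a point where `|F m| ≲ A / (L/3)^m` in each outer third and the mean value theorem
between them give a point where `|F (m+1)| ≲ A / L^(m+1)`; by induction, every `F m` is small,
of order `A / L^m`, *somewhere* on the interval. Integrating `F (m+1)` downward from the a priori
bound `|F n| ≤ B` then bounds `F m` everywhere by `(K A + B L^n) / L^m`, with `K` a sum of the
constants `pointConst j`. Finally `b ≤ c₀^ε` with `k ≥ 1/ε` and `b < 1` gives `b^k ≤ c₀`, so the
`B L^n` term is also of order `c₀`. -/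

/-- The recursion is `2 · 3^(m+1)`: the slope between two values of size
`pointConst m · A / (L/3)^m` at points at least `L/3` apart. -/
noncomputable def pointConst : ℕ → ℝ
  | 0 => 1
  | m + 1 => 6 * 3 ^ m * pointConst m

lemma pointConst_pos (m : ℕ) : 0 < pointConst m := by
  induction m with
  | zero => simp [pointConst]
  | succ m ih => simp only [pointConst]; positivity

lemma exists_mem_Ioo_abs_le_of_hasDerivWithinAt {f f' : ℝ → ℝ} {s : Set ℝ} {u v : ℝ}
    (huv : u < v) (hsub : Icc u v ⊆ s)
    (hf : ∀ z ∈ Icc u v, HasDerivWithinAt f (f' z) s z) :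
    ∃ ξ ∈ Ioo u v, |f' ξ| ≤ (|f u| + |f v|) / (v - u) := by
  have hcont : ContinuousOn f (Icc u v) := fun z hz => (hf z hz).continuousWithinAt.mono hsub
  have hderiv : ∀ z ∈ Ioo u v, HasDerivAt f (f' z) z := fun z hz =>
    (hf z (Ioo_subset_Icc_self hz)).hasDerivAt
      (Filter.mem_of_superset (Icc_mem_nhds hz.1 hz.2) hsub)
  obtain ⟨ξ, hξ, hslope⟩ := exists_hasDerivAt_eq_slope f f' huv hcont hderiv
  refine ⟨ξ, hξ, ?_⟩
  rw [hslope, abs_div, abs_of_pos (sub_pos.2 huv)]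
  gcongr
  exact (abs_sub _ _).trans_eq (add_comm _ _)

lemma ContDiffOn.hasDerivWithinAt_iteratedDerivWithin {g : ℝ → ℝ} {s : Set ℝ} {n m : ℕ}
    (hg : ContDiffOn ℝ n g s) (hs : UniqueDiffOn ℝ s) (hm : m < n) {z : ℝ} (hz : z ∈ s) :
    HasDerivWithinAt (iteratedDerivWithin m g s) (iteratedDerivWithin (m + 1) g s z) s z := by
  rw [iteratedDerivWithin_succ]
  exact ((hg.differentiableOn_iteratedDerivWithin (mod_cast hm) hs) z hz).hasDerivWithinAt

lemma pow_le_of_le_rpow {b c ε : ℝ} {k : ℕ} (hb : 0 < b) (hc₀ : 0 ≤ c) (hc₁ : c < 1)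
    (hε : 0 < ε) (hk : 1 / ε ≤ k) (hbc : b ≤ c ^ ε) : b ^ k ≤ c := by
  have hb₁ : b ≤ 1 := hbc.trans (Real.rpow_lt_one hc₀ hc₁ hε).le
  calc b ^ k = b ^ (k : ℝ) := (Real.rpow_natCast b k).symm
    _ ≤ b ^ (1 / ε) := Real.rpow_le_rpow_of_exponent_ge hb hb₁ hk
    _ ≤ (c ^ ε) ^ (1 / ε) := by gcongr
    _ = c := by rw [← Real.rpow_mul hc₀, mul_one_div_cancel hε.ne', Real.rpow_one]

section DerivativeSequence

variable {F : ℕ → ℝ → ℝ} {n : ℕ} {A : ℝ}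

lemma exists_mem_Icc_abs_le_pointConst {s : Set ℝ}
    (hF : ∀ m < n, ∀ z ∈ s, HasDerivWithinAt (F m) (F (m + 1) z) s z)
    (hA : ∀ z ∈ s, |F 0 z| ≤ A) {m : ℕ} (hm : m ≤ n) {u L : ℝ} (hL : 0 < L)
    (hsub : Icc u (u + L) ⊆ s) :
    ∃ ξ ∈ Icc u (u + L), |F m ξ| ≤ pointConst m * A / L ^ m := by
  induction m generalizing u L with
  | zero =>
    have hu : u ∈ Icc u (u + L) := left_mem_Icc.2 (by linarith)
    exact ⟨u, hu, by simpa [pointConst] using hA u (hsub hu)⟩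
  | succ m ih =>
    obtain ⟨ξ₁, hξ₁, h₁⟩ := ih (by omega) (u := u) (L := L / 3) (by positivity)
      ((Icc_subset_Icc le_rfl (by linarith)).trans hsub)
    obtain ⟨ξ₂, hξ₂, h₂⟩ := ih (by omega) (u := u + 2 * L / 3) (L := L / 3)
      (by positivity)
      ((Icc_subset_Icc (by linarith) (by linarith)).trans hsub)
    have hgap : L / 3 ≤ ξ₂ - ξ₁ := by linarith [hξ₁.2, hξ₂.1]
    have hξ₁₂ : Icc ξ₁ ξ₂ ⊆ Icc u (u + L) :=
      Icc_subset_Icc hξ₁.1 (by linarith [hξ₂.2])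
    obtain ⟨ξ, hξ, hbound⟩ := exists_mem_Ioo_abs_le_of_hasDerivWithinAt (f := F m)
      (by linarith) (hξ₁₂.trans hsub) fun z hz => hF m (by omega) z (hsub (hξ₁₂ hz))
    refine ⟨ξ, hξ₁₂ (Ioo_subset_Icc_self hξ), hbound.trans ?_⟩
    calc (|F m ξ₁| + |F m ξ₂|) / (ξ₂ - ξ₁)
        ≤ (pointConst m * A / (L / 3) ^ m + pointConst m * A / (L / 3) ^ m) / (L / 3) := by
          gcongr ?_ / ?_
          · linarith [abs_nonneg (F m ξ₁), abs_nonneg (F m ξ₂)]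
          · exact add_le_add h₁ h₂
      _ = pointConst (m + 1) * A / L ^ (m + 1) := by
          rw [div_pow]; simp only [pointConst]; field_simp; ring

theorem abs_le_of_abs_zero_le_of_abs_top_le {a L B : ℝ} (hL : 0 < L)
    (hF : ∀ m < n, ∀ z ∈ Icc a (a + L),
      HasDerivWithinAt (F m) (F (m + 1) z) (Icc a (a + L)) z)
    (hA : ∀ z ∈ Icc a (a + L), |F 0 z| ≤ A) (hB : ∀ z ∈ Icc a (a + L), |F n z| ≤ B)
    {m : ℕ} (hm : m ≤ n) :
    ∀ t ∈ Icc a (a + L),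
      |F m t| ≤ ((∑ j ∈ Finset.Ico m n, pointConst j) * A + B * L ^ n) / L ^ m := by
  induction hm using Nat.decreasingInduction with
  | self => simpa [hL.ne'] using hB
  | of_succ m hm ih =>
    intro t ht
    set M := ((∑ j ∈ Finset.Ico (m + 1) n, pointConst j) * A + B * L ^ n) / L ^ (m + 1) with hM
    obtain ⟨ξ, hξ, hξ_le⟩ := exists_mem_Icc_abs_le_pointConst hF hA hm.le hL subset_rfl
    have hlip : |F m t - F m ξ| ≤ M * L := by
      have h := (convex_Icc a (a + L)).norm_image_sub_le_of_norm_hasDerivWithin_le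
        (hF m hm) ih hξ ht
      have hdist : ‖t - ξ‖ ≤ L := by
        simpa [Real.dist_eq] using Real.dist_le_of_mem_Icc ht hξ
      exact h.trans (mul_le_mul_of_nonneg_left hdist ((abs_nonneg _).trans (ih t ht)))
    calc |F m t| ≤ |F m ξ| + |F m t - F m ξ| := by
          linarith [abs_sub_abs_le_abs_sub (F m t) (F m ξ)]
      _ ≤ pointConst m * A / L ^ m + M * L := add_le_add hξ_le hlip
      _ = _ := by
          rw [Finset.sum_eq_sum_Ico_succ_bot hm, hM, pow_succ]
          field_simp
          ring

end DerivativeSequence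

/-- If `g ∈ C^k(I)` on an interval of length `b` with `‖g^{(m)}‖_∞ ≤ c_m`, `c₀ < 1`,
`k ≥ 1/ε` and `b ≤ c₀^ε`, then `‖g^{(m)}‖_∞ ≤ c₀ · C̃_m(ε) · b^{-m}` where the constants
`C̃_m(ε)` depend only on `ε` and `c₁, …, c_k` (not on `b` or `c₀`). -/
theorem derivative_interpolation
    (ε : ℝ) (hε : 0 < ε) (k : ℕ) (hk : (1 : ℝ) / ε ≤ k) (c : ℕ → ℝ) :
    ∃ Ct : ℕ → ℝ, (∀ m, 0 ≤ Ct m) ∧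
      ∀ (g : ℝ → ℝ) (x b c0 : ℝ), 0 < b →
        ContDiffOn ℝ k g (Icc x (x + b)) →
        (∀ t ∈ Icc x (x + b), |g t| ≤ c0) →
        (∀ m, 1 ≤ m → m ≤ k → ∀ t ∈ Icc x (x + b),
          |iteratedDerivWithin m g (Icc x (x + b)) t| ≤ c m) →
        c0 < 1 → b ≤ c0 ^ ε →
        ∀ m ≤ k, ∀ t ∈ Icc x (x + b),
          |iteratedDerivWithin m g (Icc x (x + b)) t| ≤ c0 * Ct m * b ^ (-(m : ℝ)) := by
  refine ⟨fun m => ∑ j ∈ Finset.Ico m k, pointConst j + max (c k) 0,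
    fun m => add_nonneg (Finset.sum_nonneg fun j _ => (pointConst_pos j).le) (le_max_right _ _),
    fun g x b c0 hb hg hg₀ hgc hc0 hbc0 m hm t ht => ?_⟩
  have hk₁ : 1 ≤ k := by
    have : (0 : ℝ) < k := (one_div_pos.2 hε).trans_le hk
    exact_mod_cast this
  have hc0_nonneg : 0 ≤ c0 := (abs_nonneg _).trans (hg₀ x (left_mem_Icc.2 (by linarith)))
  have hbk : b ^ k ≤ c0 := pow_le_of_le_rpow hb hc0_nonneg hc0 hε hk hbc0
  have hS : UniqueDiffOn ℝ (Icc x (x + b)) := uniqueDiffOn_Icc (by linarith)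
  have key := abs_le_of_abs_zero_le_of_abs_top_le
    (F := fun m => iteratedDerivWithin m g (Icc x (x + b))) hb
    (fun m hm z hz => hg.hasDerivWithinAt_iteratedDerivWithin hS hm hz)
    (by simpa using hg₀) (hgc k hk₁ le_rfl) hm t ht
  calc _ ≤ _ := key
    _ ≤ ((∑ j ∈ Finset.Ico m k, pointConst j) * c0 + max (c k) 0 * c0) / b ^ m := by
        gcongr (_ + ?_) / _
        exact (mul_le_mul_of_nonneg_right (le_max_left _ _) (by positivity)).trans
          (mul_le_mul_of_nonneg_left hbk (le_max_right _ _))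
    _ = _ := by rw [Real.rpow_neg hb.le, Real.rpow_natCast]; ring
end

section
/- Let I = [0,1] and h ∈ C^{m+1}(I,ℝ) with ‖h‖_∞ ≤ c_0. Then for each j = 0,…,m there exist points t^j_0 < t^j_1 < ⋯ < t^j_{2^{m-j}-1} in [0,1] with t^j_{i+1} − t^j_i ≥ 2^{-m} and |h^{(j)}(t^j_i)| ≤ c_0 · 2^{(m+1)j} for every i. -/
open Set

/-!
Start from the `2^m` equally spaced points `i · 2^{-m}`, where `|h| ≤ c₀`. Given `2N` points
`t_k`, pairwise `2^{-m}`-separated, with `|h^{(j)}(t_k)| ≤ B`, the mean value theorem on each pair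
`[t_{2i}, t_{2i+1}]` yields `c_i` with `|h^{(j+1)}(c_i)| ≤ 2B / (t_{2i+1} - t_{2i}) ≤ 2^{m+1} B`,
and `c_{i+1} - c_i ≥ t_{2i+2} - t_{2i+1} ≥ 2^{-m}`, so the `N` new points are again separated.
-/

theorem exists_mem_Ioo_abs_deriv_mul_le {g g' : ℝ → ℝ} {a b B : ℝ} (hab : a < b)
    (hgc : ContinuousOn g (Icc a b)) (hg : ∀ x ∈ Ioo a b, HasDerivAt g (g' x) x)
    (ha : |g a| ≤ B) (hb : |g b| ≤ B) :
    ∃ c ∈ Ioo a b, |g' c| * (b - a) ≤ 2 * B := by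
  obtain ⟨c, hc, hslope⟩ := exists_hasDerivAt_eq_slope g g' hab hgc hg
  refine ⟨c, hc, ?_⟩
  calc |g' c| * (b - a) = |g b - g a| := by
        rw [hslope, abs_div, abs_of_pos (sub_pos.2 hab), div_mul_cancel₀ _ (sub_pos.2 hab).ne']
    _ ≤ |g b| + |g a| := abs_sub _ _
    _ ≤ 2 * B := by linarith

theorem exists_separated_abs_deriv_mul_le {s : Set ℝ} (hs : s.OrdConnected) {g g' : ℝ → ℝ}
    (hgc : ContinuousOn g s) (hg : ∀ x ∈ interior s, HasDerivAt g (g' x) x)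
    {n : ℕ} {δ B : ℝ} (hδ : 0 < δ) {t : ℕ → ℝ}
    (ht : ∀ i, i < 2 * n → t i ∈ s ∧ |g (t i)| ≤ B)
    (hsep : ∀ i, i + 1 < 2 * n → δ ≤ t (i + 1) - t i) :
    ∃ c : ℕ → ℝ, (∀ i, i < n → c i ∈ s ∧ |g' (c i)| * δ ≤ 2 * B) ∧
      ∀ i, i + 1 < n → δ ≤ c (i + 1) - c i := by
  have hpair : ∀ i, ∃ c, i < n →
      c ∈ Ioo (t (2 * i)) (t (2 * i + 1)) ∧ |g' c| * δ ≤ 2 * B := by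
    intro i
    by_cases hi : i < n
    · obtain ⟨ha, ha'⟩ := ht (2 * i) (by omega)
      obtain ⟨hb, hb'⟩ := ht (2 * i + 1) (by omega)
      have hgap := hsep (2 * i) (by omega)
      have hIcc : Icc (t (2 * i)) (t (2 * i + 1)) ⊆ s := hs.out ha hb
      have hIoo : Ioo (t (2 * i)) (t (2 * i + 1)) ⊆ interior s :=
        interior_maximal (Ioo_subset_Icc_self.trans hIcc) isOpen_Ioo
      obtain ⟨c, hc, hbound⟩ := exists_mem_Ioo_abs_deriv_mul_le (by linarith)
        (hgc.mono hIcc) (fun x hx => hg x (hIoo hx)) ha' hb'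
      exact ⟨c, fun _ => ⟨hc, (mul_le_mul_of_nonneg_left hgap (abs_nonneg _)).trans hbound⟩⟩
    · exact ⟨0, fun hi' => absurd hi' hi⟩
  choose c hc using hpair
  refine ⟨c, fun i hi => ⟨?_, (hc i hi).2⟩, fun i hi => ?_⟩
  · obtain ⟨ha, -⟩ := ht (2 * i) (by omega)
    obtain ⟨hb, -⟩ := ht (2 * i + 1) (by omega)
    exact hs.out ha hb (Ioo_subset_Icc_self (hc i hi).1)
  · have hleft := (hc i (by omega)).1.2
    have hright := (hc (i + 1) hi).1.1
    have hgap := hsep (2 * i + 1) (by omega)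
    rw [show 2 * i + 1 + 1 = 2 * (i + 1) by ring] at hgap
    linarith

theorem ContDiffOn.hasDerivAt_iteratedDerivWithin {𝕜 F : Type*} [NontriviallyNormedField 𝕜]
    [NormedAddCommGroup F] [NormedSpace 𝕜 F] {s : Set 𝕜} {h : 𝕜 → F} {n : WithTop ℕ∞} {j : ℕ}
    (hh : ContDiffOn 𝕜 n h s) (hj : (j : WithTop ℕ∞) < n) (hs : UniqueDiffOn 𝕜 s)
    {x : 𝕜} (hx : x ∈ interior s) :
    HasDerivAt (iteratedDerivWithin j h s) (iteratedDerivWithin (j + 1) h s x) x := by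
  rw [iteratedDerivWithin_succ]
  exact ((hh.differentiableOn_iteratedDerivWithin hj hs x (interior_subset hx)).hasDerivWithinAt
    ).hasDerivAt (mem_interior_iff_mem_nhds.1 hx)

/-- Mean value point construction: if `‖h‖_∞ ≤ c₀` on `[0,1]`, then for each `j ≤ m`
there are `2^{m-j}` points, separated by at least `2^{-m}`, at which
`|h^{(j)}| ≤ c₀ · 2^{(m+1)j}`. -/
theorem mean_value_points
    (m : ℕ) (c0 : ℝ) (h : ℝ → ℝ)
    (hh : ContDiffOn ℝ (m + 1) h (Icc (0 : ℝ) 1))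
    (hbound : ∀ t ∈ Icc (0 : ℝ) 1, |h t| ≤ c0) :
    ∀ j ≤ m, ∃ t : ℕ → ℝ,
      (∀ i, i < 2 ^ (m - j) → t i ∈ Icc (0 : ℝ) 1 ∧
        |iteratedDerivWithin j h (Icc (0 : ℝ) 1) (t i)| ≤ c0 * 2 ^ ((m + 1) * j)) ∧
      (∀ i, i + 1 < 2 ^ (m - j) → (2 : ℝ) ^ (-(m : ℤ)) ≤ t (i + 1) - t i) := by
  have hδ : (2 : ℝ) ^ (-(m : ℤ)) = ((2 : ℝ) ^ m)⁻¹ := by rw [zpow_neg, zpow_natCast]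
  intro j hj
  induction j with
  | zero =>
    refine ⟨fun i => i * (2 ^ m : ℝ)⁻¹, fun i hi => ?_,
      fun i _ => le_of_eq (by push_cast; rw [hδ]; ring)⟩
    have hmem : (i : ℝ) * (2 ^ m : ℝ)⁻¹ ∈ Icc (0 : ℝ) 1 := by
      refine ⟨by positivity, ?_⟩
      rw [← div_eq_mul_inv, div_le_one (by positivity)]
      exact_mod_cast hi.le
    exact ⟨hmem, by simpa using hbound _ hmem⟩
  | succ j ih =>
    obtain ⟨t, ht, hsep⟩ := ih (by omega)
    rw [show m - j = (m - (j + 1)) + 1 by omega, pow_succ'] at ht hsep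
    have hs := uniqueDiffOn_Icc (zero_lt_one' ℝ)
    obtain ⟨c, hc, hcsep⟩ := exists_separated_abs_deriv_mul_le ordConnected_Icc
      (hh.continuousOn_iteratedDerivWithin (by exact_mod_cast by omega) hs)
      (fun x hx => hh.hasDerivAt_iteratedDerivWithin (by exact_mod_cast by omega) hs hx)
      (by positivity) ht hsep
    refine ⟨c, fun i hi => ⟨(hc i hi).1, ?_⟩, hcsep⟩
    have hscale : 2 * (c0 * 2 ^ ((m + 1) * j)) / (2 : ℝ) ^ (-(m : ℤ))
        = c0 * 2 ^ ((m + 1) * (j + 1)) := by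
      rw [hδ, div_inv_eq_mul, mul_add, mul_one, pow_add, pow_succ]
      ring
    rw [← hscale, le_div_iff₀ (by positivity)]
    exact (hc i hi).2
end

section
/- Let φ be C² on Σ with H > 0 on Σ, and define for points z, z₁, z₂ ∈ Σ the transversality quantity Γ_z(z₁,z₂) := ⟨(D²φ(z))^{-1}(∇φ(z₂) − ∇φ(z₁)), ∇φ(z₂) − ∇φ(z₁)⟩, and the linear factors t¹_z(z₁,z₂) := (φ_x(z₂) − φ_x(z₁)) − B(z)(φ_y(z₂) − φ_y(z₁)) and t²_z(z₁,z₂) := (φ_y(z₂) − φ_y(z₁)) − A(z)(φ_x(z₂) − φ_x(z₁)). Then Γ_z(z₁,z₂) = (2/q(z)) · t¹_z(z₁,z₂) · t²_z(z₁,z₂). -/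
open Real Set Matrix

/-- The square `Σ = [-1,1]²`. -/
def Sig : Set (ℝ × ℝ) := Set.Icc ((-1, -1) : ℝ × ℝ) (1, 1)

/-- The square `2Σ = [-2,2]²`. -/
def Sig2 : Set (ℝ × ℝ) := Set.Icc ((-2, -2) : ℝ × ℝ) (2, 2)

/-- Partial derivative `φ_x`. -/
noncomputable def px (φ : ℝ × ℝ → ℝ) (z : ℝ × ℝ) : ℝ := deriv (fun t => φ (t, z.2)) z.1

/-- Partial derivative `φ_y`. -/
noncomputable def py (φ : ℝ × ℝ → ℝ) (z : ℝ × ℝ) : ℝ := deriv (fun t => φ (z.1, t)) z.2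

/-- Second partial derivative `φ_{xx}`. -/
noncomputable def pxx (φ : ℝ × ℝ → ℝ) (z : ℝ × ℝ) : ℝ := deriv (fun t => px φ (t, z.2)) z.1

/-- Second partial derivative `φ_{xy}`. -/
noncomputable def pxy (φ : ℝ × ℝ → ℝ) (z : ℝ × ℝ) : ℝ := deriv (fun t => px φ (z.1, t)) z.2

/-- Second partial derivative `φ_{yy}`. -/
noncomputable def pyy (φ : ℝ × ℝ → ℝ) (z : ℝ × ℝ) : ℝ := deriv (fun t => py φ (z.1, t)) z.2

/-- `H = φ_{xy}² − φ_{xx} φ_{yy}` (minus the Hessian determinant). -/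
noncomputable def HH (φ : ℝ × ℝ → ℝ) (z : ℝ × ℝ) : ℝ := pxy φ z ^ 2 - pxx φ z * pyy φ z

/-- `A = φ_{yy}/(φ_{xy} + √H)`. -/
noncomputable def AA (φ : ℝ × ℝ → ℝ) (z : ℝ × ℝ) : ℝ :=
  pyy φ z / (pxy φ z + Real.sqrt (HH φ z))

/-- `B = φ_{xx}/(φ_{xy} + √H)`. -/
noncomputable def BB (φ : ℝ × ℝ → ℝ) (z : ℝ × ℝ) : ℝ :=
  pxx φ z / (pxy φ z + Real.sqrt (HH φ z))

/-- `q = 2H/(φ_{xy} + √H)`. -/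
noncomputable def qf (φ : ℝ × ℝ → ℝ) (z : ℝ × ℝ) : ℝ :=
  2 * HH φ z / (pxy φ z + Real.sqrt (HH φ z))

/-- The Hessian matrix `D²φ(z)`. -/
noncomputable def Hess (φ : ℝ × ℝ → ℝ) (z : ℝ × ℝ) : Matrix (Fin 2) (Fin 2) ℝ :=
  !![pxx φ z, pxy φ z; pxy φ z, pyy φ z]

/-- The linear factor `t¹_z(z₁,z₂) = (φ_x(z₂) − φ_x(z₁)) − B(z)(φ_y(z₂) − φ_y(z₁))`. -/
noncomputable def t1 (φ : ℝ × ℝ → ℝ) (z z1 z2 : ℝ × ℝ) : ℝ :=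
  (px φ z2 - px φ z1) - BB φ z * (py φ z2 - py φ z1)

/-- The linear factor `t²_z(z₁,z₂) = (φ_y(z₂) − φ_y(z₁)) − A(z)(φ_x(z₂) − φ_x(z₁))`. -/
noncomputable def t2 (φ : ℝ × ℝ → ℝ) (z z1 z2 : ℝ × ℝ) : ℝ :=
  (py φ z2 - py φ z1) - AA φ z * (px φ z2 - px φ z1)

/-- The transversality quantity `Γ_z(z₁,z₂) = ⟨(D²φ(z))⁻¹ Δ∇φ, Δ∇φ⟩`. -/
noncomputable def Gam (φ : ℝ × ℝ → ℝ) (z z1 z2 : ℝ × ℝ) : ℝ :=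
  ![px φ z2 - px φ z1, py φ z2 - py φ z1] ⬝ᵥ
    ((Hess φ z)⁻¹ *ᵥ ![px φ z2 - px φ z1, py φ z2 - py φ z1])

/-!
The inverse of the symmetric matrix `!![a, c; c, b]` has quadratic form
`(2cuv - bu² - av²)/(c² - ab)`. When `c² - ab = s²`, the binary form `2cuv - bu² - av²` splits
over the reals: `((c+s)u - av)((c+s)v - bu) = (c+s)(2cuv - bu² - av²)`, because
`(c+s)² + ab = 2c(c+s)`. Dividing by `(c+s)(c² - ab)` gives the factorization, with `s = √H`.
-/

-- For `c² = ab` both sides are `0`, since `0⁻¹ = 0`.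
theorem dotProduct_inv_mulVec_fin_two {K : Type*} [Field K] (a b c u v : K) :
    ![u, v] ⬝ᵥ (!![a, c; c, b]⁻¹ *ᵥ ![u, v]) =
      (2 * c * u * v - b * u ^ 2 - a * v ^ 2) / (c ^ 2 - a * b) := by
  have hdet : a * b - c * c = -(c ^ 2 - a * b) := by ring
  rw [inv_def, det_fin_two_of, adjugate_fin_two_of, Ring.inverse_eq_inv, hdet, smul_mulVec,
    dotProduct_smul]
  simp only [dotProduct, mulVec, Fin.sum_univ_two, of_apply, cons_val_zero, cons_val_one,
    smul_eq_mul]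
  rw [inv_neg, div_eq_inv_mul]
  ring

theorem quadratic_form_div_eq_mul_linear_factors {K : Type*} [Field K] [NeZero (2 : K)]
    {a b c s : K} (u v : K) (hs : s ^ 2 = c ^ 2 - a * b) (hd : c + s ≠ 0) :
    (2 * c * u * v - b * u ^ 2 - a * v ^ 2) / (c ^ 2 - a * b) =
      2 / (2 * (c ^ 2 - a * b) / (c + s)) * (u - a / (c + s) * v) * (v - b / (c + s) * u) := by
  rw [div_div_eq_mul_div, mul_div_mul_left _ _ two_ne_zero]
  field_simp
  congr 1
  linear_combination (-u * v) * hs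

theorem hyperbolic_factorization_general
    (φ : ℝ × ℝ → ℝ)
    (hH : ∀ z ∈ Sig, 0 < HH φ z)
    (hden : ∀ z ∈ Sig, pxy φ z + Real.sqrt (HH φ z) ≠ 0) :
    ∀ z ∈ Sig, ∀ z1 ∈ Sig, ∀ z2 ∈ Sig,
      Gam φ z z1 z2 = (2 / qf φ z) * t1 φ z z1 z2 * t2 φ z z1 z2 := by
  intro z hz z1 _ z2 _
  rw [Gam, Hess, dotProduct_inv_mulVec_fin_two, t1, t2, qf, AA, BB]
  exact quadratic_form_div_eq_mul_linear_factors _ _ (Real.sq_sqrt (hH z hz).le) (hden z hz)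

/-- The hyperbolic factorization `Γ_z(z₁,z₂) = (2/q(z)) · t¹_z(z₁,z₂) · t²_z(z₁,z₂)`. -/
theorem hyperbolic_factorization
    (φ : ℝ × ℝ → ℝ) (hφ : ContDiffOn ℝ 2 φ Sig)
    (hH : ∀ z ∈ Sig, 0 < HH φ z)
    (hden : ∀ z ∈ Sig, pxy φ z + Real.sqrt (HH φ z) ≠ 0) :
    ∀ z ∈ Sig, ∀ z1 ∈ Sig, ∀ z2 ∈ Sig,
      Gam φ z z1 z2 = (2 / qf φ z) * t1 φ z z1 z2 * t2 φ z z1 z2 :=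
  hyperbolic_factorization_general φ hH hden
end

section
/- Let φ ∈ Hyp^M(Σ), M ≥ 3, fix z₁ ∈ Σ and set t(x,y) := (φ_y(x,y) − φ_y(z₁)) − A(z₁)(φ_x(x,y) − φ_x(z₁)). Let α := min_{Σ} t and β := max_{Σ} t. Then there exists a C^{M-1} function h : [α,β] × [-1,1] → ℝ such that t(h(v,y), y) = v for all (v,y) ∈ [α,β] × [-1,1], the map (v,y) ↦ (h(v,y), y) is a C^{M-1} diffeomorphism onto its image Σ_{z₁}, Σ ⊆ Σ_{z₁} ⊆ 2Σ, and the partial derivatives satisfy |h_y| ≤ 10⁻³ and |h_v − 1| ≤ 10⁻³. -/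
open Real Set Matrix

/-- Mixed partial derivative `∂_x^a ∂_y^b φ`. -/
noncomputable def pd (a b : ℕ) (φ : ℝ × ℝ → ℝ) (z : ℝ × ℝ) : ℝ :=
  iteratedDeriv a (fun x => iteratedDeriv b (fun y => φ (x, y)) z.2) z.1

/-- The class `Hyp^M(Σ)`: `φ` is `C^M` on `2Σ = [-2,2]²`, with `φ(0)=0`, `∇φ(0)=0`,
`D²φ(0) = [[0,1],[1,0]]`, and all partial derivatives of order between `3` and `M`
bounded by `10⁻⁵` on `2Σ`. -/
def Hyp (M : ℕ) (φ : ℝ × ℝ → ℝ) : Prop :=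
  ContDiffOn ℝ M φ Sig2 ∧ φ (0, 0) = 0 ∧ px φ (0, 0) = 0 ∧ py φ (0, 0) = 0 ∧
  pxx φ (0, 0) = 0 ∧ pyy φ (0, 0) = 0 ∧ pxy φ (0, 0) = 1 ∧
  ∀ a b : ℕ, 3 ≤ a + b → a + b ≤ M → ∀ z ∈ Sig2, |pd a b φ z| ≤ 1 / 100000

/-- The function `t_{z₁}(w) = (φ_y(w) − φ_y(z₁)) − A(z₁)(φ_x(w) − φ_x(z₁))`. -/
noncomputable def tfun (φ : ℝ × ℝ → ℝ) (z₁ w : ℝ × ℝ) : ℝ :=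
  (py φ w - py φ z₁) - AA φ z₁ * (px φ w - px φ z₁)

/-!
Integrating the third-derivative bounds from the origin (Schwarz's theorem puts every third
partial in the order `∂ₓᵃ∂ᵧᵇ` that `Hyp` controls) pins the Hessian of `φ` within `4·10⁻⁵`
of `[[0,1],[1,0]]` on `(-2,2)²`. Hence `|A(z₁)| ≤ 10⁻⁴`, `t_x = φ_xy − A φ_xx` is within `10⁻⁴`
of `1` and `|t_y| = |φ_yy − A φ_xy| ≤ 2·10⁻⁴`: `t` is a `C¹`-small perturbation of `(x, y) ↦ x`.
So every slice `x ↦ t(x, y)` is strictly increasing and overshoots `[α, β]` already on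
`[-3/2, 3/2]`; `h(v, y)` is its unique root there, `C^{M-1}` by the implicit function theorem,
and differentiating `t(h(v, y), y) = v` gives `h_v = 1/t_x`, `h_y = -t_y/t_x`.
-/

open Filter Topology

section Partials

variable {f g : ℝ × ℝ → ℝ} {L : ℝ × ℝ →L[ℝ] ℝ} {z : ℝ × ℝ} {U : Set (ℝ × ℝ)}

theorem ContinuousLinearMap.apply_prod_eq {F : Type*} [NormedAddCommGroup F] [NormedSpace ℝ F]
    (L : ℝ × ℝ →L[ℝ] F) (a b : ℝ) : L (a, b) = a • L (1, 0) + b • L (0, 1) := by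
  rw [← L.map_smul, ← L.map_smul, ← L.map_add]
  simp

theorem HasFDerivAt.px_eq (hf : HasFDerivAt f L z) : px f z = L (1, 0) :=
  (hf.comp_hasDerivAt z.1 ((hasDerivAt_id z.1).prodMk (hasDerivAt_const z.1 z.2))).deriv

theorem HasFDerivAt.py_eq (hf : HasFDerivAt f L z) : py f z = L (0, 1) :=
  (hf.comp_hasDerivAt z.2 ((hasDerivAt_const z.2 z.1).prodMk (hasDerivAt_id z.2))).deriv

theorem DifferentiableAt.hasDerivAt_px {x y : ℝ} (hf : DifferentiableAt ℝ f (x, y)) :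
    HasDerivAt (fun s => f (s, y)) (px f (x, y)) x := by
  rw [hf.hasFDerivAt.px_eq]
  exact hf.hasFDerivAt.comp_hasDerivAt x ((hasDerivAt_id x).prodMk (hasDerivAt_const x y))

theorem DifferentiableAt.hasDerivAt_py {x y : ℝ} (hf : DifferentiableAt ℝ f (x, y)) :
    HasDerivAt (fun s => f (x, s)) (py f (x, y)) y := by
  rw [hf.hasFDerivAt.py_eq]
  exact hf.hasFDerivAt.comp_hasDerivAt y ((hasDerivAt_const y x).prodMk (hasDerivAt_id y))

theorem px_congr (hU : IsOpen U) (hfg : EqOn f g U) (hz : z ∈ U) : px f z = px g z := by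
  refine EventuallyEq.deriv_eq ?_
  have : Continuous fun s : ℝ => (s, z.2) := by fun_prop
  filter_upwards [this.continuousAt.preimage_mem_nhds (hU.mem_nhds hz)] with s hs using hfg hs

theorem py_congr (hU : IsOpen U) (hfg : EqOn f g U) (hz : z ∈ U) : py f z = py g z := by
  refine EventuallyEq.deriv_eq ?_
  have : Continuous fun s : ℝ => (z.1, s) := by fun_prop
  filter_upwards [this.continuousAt.preimage_mem_nhds (hU.mem_nhds hz)] with s hs using hfg hs

theorem eqOn_px_fderiv (hU : IsOpen U) (hf : DifferentiableOn ℝ f U) :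
    EqOn (px f) (fun w => fderiv ℝ f w (1, 0)) U := fun _ hw =>
  ((hf.differentiableAt (hU.mem_nhds hw)).hasFDerivAt).px_eq

theorem eqOn_py_fderiv (hU : IsOpen U) (hf : DifferentiableOn ℝ f U) :
    EqOn (py f) (fun w => fderiv ℝ f w (0, 1)) U := fun _ hw =>
  ((hf.differentiableAt (hU.mem_nhds hw)).hasFDerivAt).py_eq

variable {m n : WithTop ℕ∞}

theorem ContDiffOn.px (hf : ContDiffOn ℝ n f U) (hU : IsOpen U) (hmn : m + 1 ≤ n) :
    ContDiffOn ℝ m (px f) U :=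
  ((hf.fderiv_of_isOpen hU hmn).clm_apply contDiffOn_const).congr
    (eqOn_px_fderiv hU (hf.differentiableOn (by rintro rfl; simp at hmn)))

theorem ContDiffOn.py (hf : ContDiffOn ℝ n f U) (hU : IsOpen U) (hmn : m + 1 ≤ n) :
    ContDiffOn ℝ m (py f) U :=
  ((hf.fderiv_of_isOpen hU hmn).clm_apply contDiffOn_const).congr
    (eqOn_py_fderiv hU (hf.differentiableOn (by rintro rfl; simp at hmn)))

theorem py_px_eqOn (hf : ContDiffOn ℝ 2 f U) (hU : IsOpen U) :
    EqOn (py (px f)) (px (py f)) U := by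
  intro z hz
  have hD : ∀ v, HasFDerivAt (fun w => fderiv ℝ f w v) ((fderiv ℝ (fderiv ℝ f) z).flip v) z :=
    fun v => by
      have h1 := (hf.fderiv_of_isOpen hU (m := 1) (by norm_num)).differentiableOn one_ne_zero
      simpa using ((h1.differentiableAt (hU.mem_nhds hz)).hasFDerivAt).clm_apply
        (hasFDerivAt_const v z)
  rw [py_congr hU (eqOn_px_fderiv hU (hf.differentiableOn two_ne_zero)) hz,
    px_congr hU (eqOn_py_fderiv hU (hf.differentiableOn two_ne_zero)) hz,
    (hD _).py_eq, (hD _).px_eq]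
  exact ((hf.contDiffAt (hU.mem_nhds hz)).isSymmSndFDerivAt (by simp)) _ _

theorem pd_zero_zero (f : ℝ × ℝ → ℝ) : pd 0 0 f = f := rfl

theorem pd_succ_left (a b : ℕ) (f : ℝ × ℝ → ℝ) : pd (a + 1) b f = px (pd a b f) := by
  ext z
  simp only [pd, px, iteratedDeriv_succ]

theorem pd_zero_succ (b : ℕ) (f : ℝ × ℝ → ℝ) : pd 0 (b + 1) f = py (pd 0 b f) := by
  ext z
  simp only [pd, py, iteratedDeriv_succ, iteratedDeriv_zero]

end Partials

theorem contDiffAt_of_eventually_unique_solution {T h : ℝ × ℝ → ℝ} {n : WithTop ℕ∞}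
    {p₀ : ℝ × ℝ} {N : Set (ℝ × ℝ)} (hn : n ≠ 0) (hT : ContDiffAt ℝ n T (h p₀, p₀.2))
    (hTx : px T (h p₀, p₀.2) ≠ 0) (hp₀ : T (h p₀, p₀.2) = p₀.1) (hN : N ∈ 𝓝 (h p₀, p₀.2))
    (huniq : ∀ᶠ p in 𝓝 p₀, ∀ x, (x, p.2) ∈ N → T (x, p.2) = p.1 → x = h p) :
    ContDiffAt ℝ n h p₀ := by
  set F : (ℝ × ℝ) × ℝ → ℝ := fun q => T (q.2, q.1.2) - q.1.1
  have hF : ContDiffAt ℝ n F (p₀, h p₀) :=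
    (hT.comp (p₀, h p₀) (by fun_prop)).sub (by fun_prop)
  have hL : HasFDerivAt T (fderiv ℝ T (h p₀, p₀.2)) (h p₀, p₀.2) :=
    (hT.differentiableAt hn).hasFDerivAt
  have hF' : fderiv ℝ F (p₀, h p₀) ∘L .inr ℝ (ℝ × ℝ) ℝ = px T (h p₀, p₀.2) • .id ℝ ℝ := by
    have hFd : HasFDerivAt F (fderiv ℝ T (h p₀, p₀.2) ∘L (.prod (.snd ℝ (ℝ × ℝ) ℝ)
        (.snd ℝ ℝ ℝ ∘L .fst ℝ (ℝ × ℝ) ℝ)) - .fst ℝ ℝ ℝ ∘L .fst ℝ (ℝ × ℝ) ℝ) (p₀, h p₀) :=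
      (hL.comp (p₀, h p₀) (hasFDerivAt_snd.prodMk (hasFDerivAt_snd.comp _ hasFDerivAt_fst))).sub
        (hasFDerivAt_fst.comp _ hasFDerivAt_fst)
    ext
    simp [hFd.fderiv, hL.px_eq]
  have hinv : (fderiv ℝ F (p₀, h p₀) ∘L .inr ℝ (ℝ × ℝ) ℝ).IsInvertible := by
    rw [hF']
    refine .of_inverse (g := (px T (h p₀, p₀.2))⁻¹ • .id ℝ ℝ) ?_ ?_ <;>
      ext <;> simp [hTx]
  set ψ := hF.implicitFunction hn hinv
  have hψ : ContDiffAt ℝ n ψ p₀ := hF.contDiffAt_implicitFunction hn hinv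
  have hψ₀ : ψ p₀ = h p₀ := hF.implicitFunction_apply_self hn hinv
  have hsol : ∀ᶠ p in 𝓝 p₀, T (ψ p, p.2) = p.1 := by
    filter_upwards [hF.eventually_apply_implicitFunction hn hinv] with p hp
    exact sub_eq_zero.mp (by simpa [F, hp₀] using hp)
  have hmem : ∀ᶠ p in 𝓝 p₀, (ψ p, p.2) ∈ N := by
    have : ContinuousAt (fun p => (ψ p, p.2)) p₀ := hψ.continuousAt.prodMk continuousAt_snd
    exact this.preimage_mem_nhds (by rwa [hψ₀])
  refine hψ.congr_of_eventuallyEq ?_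
  filter_upwards [huniq, hsol, hmem] with p hu hs hm using (hu _ hm hs).symm

theorem partials_of_eventually_solution {T h : ℝ × ℝ → ℝ} {p₀ : ℝ × ℝ}
    (hT : DifferentiableAt ℝ T (h p₀, p₀.2)) (hh : DifferentiableAt ℝ h p₀)
    (hsol : ∀ᶠ p in 𝓝 p₀, T (h p, p.2) = p.1) :
    px h p₀ * px T (h p₀, p₀.2) = 1 ∧ py h p₀ * px T (h p₀, p₀.2) + py T (h p₀, p₀.2) = 0 := by
  set L := fderiv ℝ T (h p₀, p₀.2)
  have hcomp : HasFDerivAt (fun p => T (h p, p.2))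
      (L ∘L (fderiv ℝ h p₀).prod (.snd ℝ ℝ ℝ)) p₀ :=
    hT.hasFDerivAt.comp p₀ (hh.hasFDerivAt.prodMk hasFDerivAt_snd)
  have hfst : L ∘L (fderiv ℝ h p₀).prod (.snd ℝ ℝ ℝ) = .fst ℝ ℝ ℝ :=
    hcomp.unique (hasFDerivAt_fst.congr_of_eventuallyEq hsol)
  have h10 : L (fderiv ℝ h p₀ (1, 0), 0) = 1 := congrArg (· (1, 0)) hfst
  have h01 : L (fderiv ℝ h p₀ (0, 1), 1) = 0 := congrArg (· (0, 1)) hfst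
  rw [L.apply_prod_eq, ← hh.hasFDerivAt.px_eq, ← hT.hasFDerivAt.px_eq] at h10
  rw [L.apply_prod_eq, ← hh.hasFDerivAt.py_eq, ← hT.hasFDerivAt.px_eq,
    ← hT.hasFDerivAt.py_eq] at h01
  simp only [smul_eq_mul, zero_mul, add_zero, one_mul] at h10 h01
  exact ⟨h10, h01⟩

section MeanValue

variable {f : ℝ × ℝ → ℝ}

theorem ContinuousLinearMap.norm_le_abs_add_abs (L : ℝ × ℝ →L[ℝ] ℝ) :
    ‖L‖ ≤ |L (1, 0)| + |L (0, 1)| := by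
  refine L.opNorm_le_bound (by positivity) fun ⟨a, b⟩ => ?_
  have ha : |a| ≤ ‖(a, b)‖ := le_max_left _ _
  have hb : |b| ≤ ‖(a, b)‖ := le_max_right _ _
  calc ‖L (a, b)‖ ≤ |a| * |L (1, 0)| + |b| * |L (0, 1)| := by
        rw [L.apply_prod_eq]
        simpa [abs_mul] using abs_add_le (a * L (1, 0)) (b * L (0, 1))
    _ ≤ (|L (1, 0)| + |L (0, 1)|) * ‖(a, b)‖ := by
        nlinarith [abs_nonneg (L (1, 0)), abs_nonneg (L (0, 1))]

theorem Convex.abs_sub_le_of_abs_px_py_le {s : Set (ℝ × ℝ)} {K : ℝ} (hs : Convex ℝ s)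
    (hf : ∀ z ∈ s, DifferentiableAt ℝ f z) (hx : ∀ z ∈ s, |px f z| ≤ K)
    (hy : ∀ z ∈ s, |py f z| ≤ K) {z w : ℝ × ℝ} (hz : z ∈ s) (hw : w ∈ s) :
    |f z - f w| ≤ 2 * K * ‖z - w‖ := by
  refine hs.norm_image_sub_le_of_norm_fderiv_le hf (fun u hu => ?_) hw hz
  have := (fderiv ℝ f u).norm_le_abs_add_abs
  rw [← (hf u hu).hasFDerivAt.px_eq, ← (hf u hu).hasFDerivAt.py_eq] at this
  linarith [hx u hu, hy u hu]

theorem mul_sub_le_sub_of_le_px {I : Set ℝ} (hI : IsOpen I) (hIc : Convex ℝ I) {y c : ℝ}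
    (hf : ∀ x ∈ I, DifferentiableAt ℝ f (x, y)) (hc : ∀ x ∈ I, c ≤ px f (x, y))
    {x₁ x₂ : ℝ} (h₁ : x₁ ∈ I) (h₂ : x₂ ∈ I) (h : x₁ ≤ x₂) :
    c * (x₂ - x₁) ≤ f (x₂, y) - f (x₁, y) := by
  have hd : ∀ x ∈ I, HasDerivAt (fun s => f (s, y)) (px f (x, y)) x :=
    fun x hx => (hf x hx).hasDerivAt_px
  refine hIc.mul_sub_le_image_sub_of_le_deriv
    (fun x hx => (hd x hx).continuousAt.continuousWithinAt)
    (fun x hx => (hd x (interior_subset hx)).differentiableAt.differentiableWithinAt)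
    (fun x hx => ?_) x₁ h₁ x₂ h₂ h
  rw [hI.interior_eq] at hx
  rw [(hd x hx).deriv]
  exact hc x hx

theorem abs_sub_le_of_abs_py_le {J : Set ℝ} (hJ : Convex ℝ J) {x K : ℝ}
    (hf : ∀ y ∈ J, DifferentiableAt ℝ f (x, y)) (hK : ∀ y ∈ J, |py f (x, y)| ≤ K)
    {y₁ y₂ : ℝ} (h₁ : y₁ ∈ J) (h₂ : y₂ ∈ J) :
    |f (x, y₂) - f (x, y₁)| ≤ K * |y₂ - y₁| := by
  have hd : ∀ y ∈ J, HasDerivAt (fun s => f (x, s)) (py f (x, y)) y :=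
    fun y hy => (hf y hy).hasDerivAt_py
  exact hJ.norm_image_sub_le_of_norm_deriv_le (fun y hy => (hd y hy).differentiableAt)
    (fun y hy => by rw [(hd y hy).deriv]; exact hK y hy) h₁ h₂

end MeanValue

def openSig2 : Set (ℝ × ℝ) := Ioo (-2) 2 ×ˢ Ioo (-2) 2

theorem isOpen_openSig2 : IsOpen openSig2 := isOpen_Ioo.prod isOpen_Ioo

theorem convex_openSig2 : Convex ℝ openSig2 := (convex_Ioo _ _).prod (convex_Ioo _ _)

theorem openSig2_subset_Sig2 : openSig2 ⊆ Sig2 := fun _ ⟨hx, hy⟩ =>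
  ⟨⟨by linarith [hx.1], by linarith [hy.1]⟩, ⟨by linarith [hx.2], by linarith [hy.2]⟩⟩

theorem Sig_subset_openSig2 : Sig ⊆ openSig2 := fun _ ⟨⟨hx₁, hy₁⟩, ⟨hx₂, hy₂⟩⟩ =>
  ⟨⟨by linarith, by linarith⟩, ⟨by linarith, by linarith⟩⟩

theorem zero_mem_Sig : ((0, 0) : ℝ × ℝ) ∈ Sig := ⟨by norm_num, by norm_num⟩

theorem norm_lt_two_of_mem_openSig2 {z : ℝ × ℝ} (hz : z ∈ openSig2) : ‖z‖ < 2 :=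
  max_lt (abs_lt.2 hz.1) (abs_lt.2 hz.2)

theorem abs_sub_zero_le_of_mem_openSig2 {g : ℝ × ℝ → ℝ} (hg : DifferentiableOn ℝ g openSig2)
    (hx : ∀ z ∈ openSig2, |px g z| ≤ 1 / 100000) (hy : ∀ z ∈ openSig2, |py g z| ≤ 1 / 100000)
    {z : ℝ × ℝ} (hz : z ∈ openSig2) : |g z - g (0, 0)| ≤ 4 / 100000 := by
  have h₀ := Sig_subset_openSig2 zero_mem_Sig
  have := convex_openSig2.abs_sub_le_of_abs_px_py_le
    (fun w hw => hg.differentiableAt (isOpen_openSig2.mem_nhds hw)) hx hy hz h₀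
  have hn : ‖z - (0, 0)‖ < 2 := by
    rw [Prod.mk_zero_zero, sub_zero]; exact norm_lt_two_of_mem_openSig2 hz
  nlinarith

structure NearFst (T : ℝ × ℝ → ℝ) : Prop where
  differentiableOn : DifferentiableOn ℝ T openSig2
  abs_px_sub_one_le : ∀ z ∈ openSig2, |px T z - 1| ≤ 1 / 10000
  abs_py_le : ∀ z ∈ openSig2, |py T z| ≤ 2 / 10000

namespace Hyp

variable {M : ℕ} {φ : ℝ × ℝ → ℝ} (hM : 3 ≤ M) (hφ : Hyp M φ) {z₁ : ℝ × ℝ}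
include hM hφ

theorem contDiffOn_openSig2 : ContDiffOn ℝ 3 φ openSig2 :=
  (hφ.1.mono openSig2_subset_Sig2).of_le (by exact_mod_cast hM)

theorem abs_pd_le {a b : ℕ} (hab : a + b = 3) {z : ℝ × ℝ} (hz : z ∈ openSig2) :
    |pd a b φ z| ≤ 1 / 100000 :=
  hφ.2.2.2.2.2.2.2 a b hab.ge (hab ▸ hM) z (openSig2_subset_Sig2 hz)

theorem contDiffOn_px : ContDiffOn ℝ 2 (px φ) openSig2 :=
  (hφ.contDiffOn_openSig2 hM).px isOpen_openSig2 (by norm_num)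

theorem contDiffOn_py : ContDiffOn ℝ 2 (py φ) openSig2 :=
  (hφ.contDiffOn_openSig2 hM).py isOpen_openSig2 (by norm_num)

theorem py_px_eqOn : EqOn (py (px φ)) (px (py φ)) openSig2 :=
  _root_.py_px_eqOn ((hφ.contDiffOn_openSig2 hM).of_le (by norm_num)) isOpen_openSig2

theorem abs_px_px_px_le {z : ℝ × ℝ} (hz : z ∈ openSig2) : |px (px (px φ)) z| ≤ 1 / 100000 := by
  simpa only [pd_succ_left, pd_zero_zero] using hφ.abs_pd_le hM (a := 3) (b := 0) rfl hz

theorem abs_px_px_py_le {z : ℝ × ℝ} (hz : z ∈ openSig2) : |px (px (py φ)) z| ≤ 1 / 100000 := by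
  simpa only [pd_succ_left, pd_zero_succ, pd_zero_zero] using
    hφ.abs_pd_le hM (a := 2) (b := 1) rfl hz

theorem abs_px_py_py_le {z : ℝ × ℝ} (hz : z ∈ openSig2) : |px (py (py φ)) z| ≤ 1 / 100000 := by
  simpa only [pd_succ_left, pd_zero_succ, pd_zero_zero] using
    hφ.abs_pd_le hM (a := 1) (b := 2) rfl hz

theorem abs_py_py_py_le {z : ℝ × ℝ} (hz : z ∈ openSig2) : |py (py (py φ)) z| ≤ 1 / 100000 := by
  simpa only [pd_zero_succ, pd_zero_zero] using hφ.abs_pd_le hM (a := 0) (b := 3) rfl hz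

theorem abs_pxx_le {z : ℝ × ℝ} (hz : z ∈ openSig2) : |pxx φ z| ≤ 4 / 100000 := by
  have hg : ContDiffOn ℝ 1 (px (px φ)) openSig2 :=
    (hφ.contDiffOn_px hM).px isOpen_openSig2 (by norm_num)
  have hy : EqOn (py (px (px φ))) (px (px (py φ))) openSig2 := fun w hw => by
    rw [_root_.py_px_eqOn (hφ.contDiffOn_px hM) isOpen_openSig2 hw,
      px_congr isOpen_openSig2 (hφ.py_px_eqOn hM) hw]
  have := abs_sub_zero_le_of_mem_openSig2 (hg.differentiableOn one_ne_zero)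
    (fun w hw => hφ.abs_px_px_px_le hM hw) (fun w hw => hy hw ▸ hφ.abs_px_px_py_le hM hw) hz
  rwa [show px (px φ) (0, 0) = 0 from hφ.2.2.2.2.1, sub_zero] at this

theorem abs_pyy_le {z : ℝ × ℝ} (hz : z ∈ openSig2) : |pyy φ z| ≤ 4 / 100000 := by
  have hg : ContDiffOn ℝ 1 (py (py φ)) openSig2 :=
    (hφ.contDiffOn_py hM).py isOpen_openSig2 (by norm_num)
  have := abs_sub_zero_le_of_mem_openSig2 (hg.differentiableOn one_ne_zero)
    (fun w hw => hφ.abs_px_py_py_le hM hw) (fun w hw => hφ.abs_py_py_py_le hM hw) hz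
  rwa [show py (py φ) (0, 0) = 0 from hφ.2.2.2.2.2.1, sub_zero] at this

theorem abs_pxy_sub_one_le {z : ℝ × ℝ} (hz : z ∈ openSig2) : |pxy φ z - 1| ≤ 4 / 100000 := by
  have hg : ContDiffOn ℝ 1 (px (py φ)) openSig2 :=
    (hφ.contDiffOn_py hM).px isOpen_openSig2 (by norm_num)
  have hy : EqOn (py (px (py φ))) (px (py (py φ))) openSig2 :=
    _root_.py_px_eqOn (hφ.contDiffOn_py hM) isOpen_openSig2
  have := abs_sub_zero_le_of_mem_openSig2 (hg.differentiableOn one_ne_zero)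
    (fun w hw => hφ.abs_px_px_py_le hM hw) (fun w hw => hy hw ▸ hφ.abs_px_py_py_le hM hw) hz
  have h₀ := Sig_subset_openSig2 zero_mem_Sig
  rwa [← hφ.py_px_eqOn hM hz, ← hφ.py_px_eqOn hM h₀,
    show py (px φ) (0, 0) = 1 from hφ.2.2.2.2.2.2.1] at this

theorem abs_AA_le (hz₁ : z₁ ∈ openSig2) : |AA φ z₁| ≤ 1 / 10000 := by
  have hyy := hφ.abs_pyy_le hM hz₁
  have hden : 1 - 4 / 100000 ≤ pxy φ z₁ + √(HH φ z₁) := by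
    linarith [Real.sqrt_nonneg (HH φ z₁), (abs_le.1 (hφ.abs_pxy_sub_one_le hM hz₁)).1]
  rw [AA, abs_div, abs_of_pos (a := pxy φ z₁ + _) (by linarith), div_le_iff₀ (by linarith)]
  linarith

theorem contDiffOn_tfun : ContDiffOn ℝ (M - 1 : ℕ) (tfun φ z₁) openSig2 := by
  have hle : ((M - 1 : ℕ) : WithTop ℕ∞) + 1 ≤ M := by exact_mod_cast (by omega : M - 1 + 1 ≤ M)
  have hM' := hφ.1.mono openSig2_subset_Sig2
  exact ((hM'.py isOpen_openSig2 hle).sub contDiffOn_const).sub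
    (contDiffOn_const.mul ((hM'.px isOpen_openSig2 hle).sub contDiffOn_const))

theorem px_tfun {z : ℝ × ℝ} (hz : z ∈ openSig2) :
    px (tfun φ z₁) z = pxy φ z - AA φ z₁ * pxx φ z := by
  have hd := fun {g : ℝ × ℝ → ℝ} (hg : ContDiffOn ℝ 2 g openSig2) =>
    (hg.differentiableOn two_ne_zero).differentiableAt (isOpen_openSig2.mem_nhds hz)
  obtain ⟨x, y⟩ := z
  rw [show pxy φ (x, y) = px (py φ) (x, y) from hφ.py_px_eqOn hM hz]
  exact ((((hd (hφ.contDiffOn_py hM)).hasDerivAt_px).sub_const _).sub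
    ((((hd (hφ.contDiffOn_px hM)).hasDerivAt_px).sub_const _).const_mul _)).deriv

theorem py_tfun {z : ℝ × ℝ} (hz : z ∈ openSig2) :
    py (tfun φ z₁) z = pyy φ z - AA φ z₁ * pxy φ z := by
  have hd := fun {g : ℝ × ℝ → ℝ} (hg : ContDiffOn ℝ 2 g openSig2) =>
    (hg.differentiableOn two_ne_zero).differentiableAt (isOpen_openSig2.mem_nhds hz)
  obtain ⟨x, y⟩ := z
  exact ((((hd (hφ.contDiffOn_py hM)).hasDerivAt_py).sub_const _).sub
    ((((hd (hφ.contDiffOn_px hM)).hasDerivAt_py).sub_const _).const_mul _)).deriv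

theorem abs_px_tfun_sub_one_le (hz₁ : z₁ ∈ openSig2) {z : ℝ × ℝ} (hz : z ∈ openSig2) :
    |px (tfun φ z₁) z - 1| ≤ 1 / 10000 := by
  rw [hφ.px_tfun hM hz, sub_right_comm]
  calc |pxy φ z - 1 - AA φ z₁ * pxx φ z| ≤ |pxy φ z - 1| + |AA φ z₁| * |pxx φ z| := by
        rw [← abs_mul]; exact abs_sub _ _
    _ ≤ 4 / 100000 + 1 / 10000 * (4 / 100000) := by
        gcongr
        exacts [hφ.abs_pxy_sub_one_le hM hz, hφ.abs_AA_le hM hz₁, hφ.abs_pxx_le hM hz]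
    _ ≤ 1 / 10000 := by norm_num

theorem abs_py_tfun_le (hz₁ : z₁ ∈ openSig2) {z : ℝ × ℝ} (hz : z ∈ openSig2) :
    |py (tfun φ z₁) z| ≤ 2 / 10000 := by
  have hxy : |pxy φ z| ≤ 1 + 4 / 100000 := by
    have := abs_le.1 (hφ.abs_pxy_sub_one_le hM hz)
    exact abs_le.2 ⟨by linarith, by linarith⟩
  rw [hφ.py_tfun hM hz]
  calc |pyy φ z - AA φ z₁ * pxy φ z| ≤ |pyy φ z| + |AA φ z₁| * |pxy φ z| := by
        rw [← abs_mul]; exact abs_sub _ _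
    _ ≤ 4 / 100000 + 1 / 10000 * (1 + 4 / 100000) := by
        gcongr
        exacts [hφ.abs_pyy_le hM hz, hφ.abs_AA_le hM hz₁]
    _ ≤ 2 / 10000 := by norm_num

theorem nearFst_tfun (hz₁ : z₁ ∈ openSig2) : NearFst (tfun φ z₁) where
  differentiableOn :=
    (hφ.contDiffOn_tfun hM).differentiableOn (by exact_mod_cast (by omega : M - 1 ≠ 0))
  abs_px_sub_one_le _ hz := hφ.abs_px_tfun_sub_one_le hM hz₁ hz
  abs_py_le _ hz := hφ.abs_py_tfun_le hM hz₁ hz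

end Hyp

def levelRect (T : ℝ × ℝ → ℝ) : Set (ℝ × ℝ) :=
  Icc (sInf (T '' Sig)) (sSup (T '' Sig)) ×ˢ Icc (-1) 1

/-- `levelCurve T` is controlled on this open neighbourhood of `levelRect T`: the `deriv`s in the
theorem are two-sided even at the edges of `levelRect T`. -/
def levelDomain (T : ℝ × ℝ → ℝ) : Set (ℝ × ℝ) :=
  Ioo (sInf (T '' Sig) - 1 / 10) (sSup (T '' Sig) + 1 / 10) ×ˢ Ioo (-3 / 2) (3 / 2)

theorem isOpen_levelDomain (T : ℝ × ℝ → ℝ) : IsOpen (levelDomain T) :=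
  isOpen_Ioo.prod isOpen_Ioo

theorem levelRect_subset_levelDomain (T : ℝ × ℝ → ℝ) : levelRect T ⊆ levelDomain T :=
  fun _ ⟨⟨hv₁, hv₂⟩, ⟨hy₁, hy₂⟩⟩ =>
    ⟨⟨by linarith, by linarith⟩, ⟨by linarith, by linarith⟩⟩

open Classical in
/-- The function `h` of the paper: `(levelCurve T (v, y), y)` is the point of the level curve
`{T = v}` at height `y`. -/
noncomputable def levelCurve (T : ℝ × ℝ → ℝ) (p : ℝ × ℝ) : ℝ :=
  if h : ∃ x ∈ Ioo (-3 / 2) (3 / 2), T (x, p.2) = p.1 then h.choose else 0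

namespace NearFst

variable {T : ℝ × ℝ → ℝ} (hT : NearFst T)
include hT

theorem differentiableAt {z : ℝ × ℝ} (hz : z ∈ openSig2) : DifferentiableAt ℝ T z :=
  hT.differentiableOn.differentiableAt (isOpen_openSig2.mem_nhds hz)

theorem mul_sub_le_sub {x₁ x₂ y : ℝ} (hx₁ : x₁ ∈ Ioo (-2) 2) (hx₂ : x₂ ∈ Ioo (-2) 2)
    (hy : y ∈ Ioo (-2) 2) (h : x₁ ≤ x₂) :
    (1 - 1 / 10000) * (x₂ - x₁) ≤ T (x₂, y) - T (x₁, y) :=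
  mul_sub_le_sub_of_le_px isOpen_Ioo (convex_Ioo _ _)
    (fun x hx => hT.differentiableAt (z := (x, y)) ⟨hx, hy⟩)
    (fun x hx => by linarith [(abs_le.1 (hT.abs_px_sub_one_le (x, y) ⟨hx, hy⟩)).1]) hx₁ hx₂ h

theorem abs_sub_le {x y₁ y₂ : ℝ} (hx : x ∈ Ioo (-2) 2) (hy₁ : y₁ ∈ Ioo (-2) 2)
    (hy₂ : y₂ ∈ Ioo (-2) 2) : |T (x, y₂) - T (x, y₁)| ≤ 2 / 10000 * |y₂ - y₁| :=
  abs_sub_le_of_abs_py_le (convex_Ioo _ _) (fun _ hy => hT.differentiableAt ⟨hx, hy⟩)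
    (fun _ hy => hT.abs_py_le _ ⟨hx, hy⟩) hy₁ hy₂

theorem injOn {y : ℝ} (hy : y ∈ Ioo (-2) 2) : InjOn (fun x => T (x, y)) (Ioo (-2) 2) := by
  intro x₁ hx₁ x₂ hx₂ (heq : T (x₁, y) = T (x₂, y))
  rcases le_total x₁ x₂ with h | h
  · linarith [hT.mul_sub_le_sub hx₁ hx₂ hy h]
  · linarith [hT.mul_sub_le_sub hx₂ hx₁ hy h]

theorem add_le_of_mem_Sig {w : ℝ × ℝ} (hw : w ∈ Sig) {y : ℝ} (hy : y ∈ Icc (-3 / 2) (3 / 2)) :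
    T (-3 / 2, y) + 1 / 10 ≤ T w ∧ T w + 1 / 10 ≤ T (3 / 2, y) := by
  obtain ⟨a, b⟩ := w
  obtain ⟨⟨ha₁, hb₁⟩, ⟨ha₂, hb₂⟩⟩ := hw
  obtain ⟨hy₁, hy₂⟩ := hy
  dsimp only at ha₁ hb₁ ha₂ hb₂
  have hI : ∀ {x : ℝ}, -3 / 2 ≤ x → x ≤ 3 / 2 → x ∈ Ioo (-2) 2 :=
    fun h₁ h₂ => ⟨by linarith, by linarith⟩
  have hl : (-3 / 2 : ℝ) ∈ Ioo (-2) 2 := hI le_rfl (by norm_num)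
  have hr : (3 / 2 : ℝ) ∈ Ioo (-2) 2 := hI (by norm_num) le_rfl
  have ha : a ∈ Ioo (-2) 2 := hI (by linarith) (by linarith)
  have hb : b ∈ Ioo (-2) 2 := hI (by linarith) (by linarith)
  have hby : |b - y| ≤ 5 / 2 := abs_le.2 ⟨by linarith, by linarith⟩
  have hlo := hT.mul_sub_le_sub hl ha hb (by linarith)
  have hhi := hT.mul_sub_le_sub ha hr hb (by linarith)
  have hvlo := abs_le.1 (hT.abs_sub_le hl (hI hy₁ hy₂) hb)
  have hvhi := abs_le.1 (hT.abs_sub_le hr (hI hy₁ hy₂) hb)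
  constructor <;> linarith

theorem bddBelow_image_Sig : BddBelow (T '' Sig) :=
  ⟨T (-3 / 2, 0) + 1 / 10, forall_mem_image.2 fun _ hw =>
    (hT.add_le_of_mem_Sig hw ⟨by norm_num, by norm_num⟩).1⟩

theorem bddAbove_image_Sig : BddAbove (T '' Sig) :=
  ⟨T (3 / 2, 0) - 1 / 10, forall_mem_image.2 fun _ hw =>
    le_sub_iff_add_le.2 (hT.add_le_of_mem_Sig hw (y := 0) ⟨by norm_num, by norm_num⟩).2⟩

theorem mem_Icc_of_mem_Sig {w : ℝ × ℝ} (hw : w ∈ Sig) :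
    T w ∈ Icc (sInf (T '' Sig)) (sSup (T '' Sig)) :=
  ⟨csInf_le hT.bddBelow_image_Sig (mem_image_of_mem T hw),
    le_csSup hT.bddAbove_image_Sig (mem_image_of_mem T hw)⟩

theorem exists_eq {v y : ℝ} (hv : v ∈ Ioo (sInf (T '' Sig) - 1 / 10) (sSup (T '' Sig) + 1 / 10))
    (hy : y ∈ Icc (-3 / 2) (3 / 2)) : ∃ x ∈ Ioo (-3 / 2) (3 / 2), T (x, y) = v := by
  have hne : (T '' Sig).Nonempty := ⟨_, mem_image_of_mem T zero_mem_Sig⟩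
  have hlo : T (-3 / 2, y) + 1 / 10 ≤ sInf (T '' Sig) :=
    le_csInf hne (forall_mem_image.2 fun _ hw => (hT.add_le_of_mem_Sig hw hy).1)
  have hhi : sSup (T '' Sig) + 1 / 10 ≤ T (3 / 2, y) :=
    (le_sub_iff_add_le.1 (csSup_le hne (forall_mem_image.2 fun _ hw =>
      le_sub_iff_add_le.2 (hT.add_le_of_mem_Sig hw hy).2)))
  have hcont : ContinuousOn (fun x => T (x, y)) (Icc (-3 / 2) (3 / 2)) := fun x hx =>
    (hT.differentiableAt (z := (x, y)) ⟨⟨by linarith [hx.1], by linarith [hx.2]⟩,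
      ⟨by linarith [hy.1], by linarith [hy.2]⟩⟩).hasDerivAt_px.continuousAt.continuousWithinAt
  exact intermediate_value_Ioo (by norm_num) hcont ⟨by linarith [hv.1], by linarith [hv.2]⟩


theorem levelCurve_spec {p : ℝ × ℝ} (hp : p ∈ levelDomain T) :
    levelCurve T p ∈ Ioo (-3 / 2) (3 / 2) ∧ T (levelCurve T p, p.2) = p.1 := by
  have h := hT.exists_eq hp.1 (Ioo_subset_Icc_self hp.2)
  rw [levelCurve, dif_pos h]
  exact h.choose_spec

theorem eq_levelCurve {p : ℝ × ℝ} (hp : p ∈ levelDomain T) {x : ℝ} (hx : x ∈ Ioo (-2) 2)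
    (hxp : T (x, p.2) = p.1) : x = levelCurve T p := by
  have hy : p.2 ∈ Ioo (-2) 2 := ⟨by linarith [hp.2.1], by linarith [hp.2.2]⟩
  obtain ⟨hmem, hsol⟩ := hT.levelCurve_spec hp
  exact hT.injOn hy hx ⟨by linarith [hmem.1], by linarith [hmem.2]⟩ (hxp.trans hsol.symm)

theorem mem_openSig2_levelCurve {p : ℝ × ℝ} (hp : p ∈ levelDomain T) :
    (levelCurve T p, p.2) ∈ openSig2 := by
  obtain ⟨⟨h₁, h₂⟩, _⟩ := hT.levelCurve_spec hp
  exact ⟨⟨by linarith, by linarith⟩, ⟨by linarith [hp.2.1], by linarith [hp.2.2]⟩⟩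

theorem contDiffAt_levelCurve {n : WithTop ℕ∞} (hn : n ≠ 0) (hTn : ContDiffOn ℝ n T openSig2)
    {p : ℝ × ℝ} (hp : p ∈ levelDomain T) : ContDiffAt ℝ n (levelCurve T) p := by
  have hz := hT.mem_openSig2_levelCurve hp
  refine contDiffAt_of_eventually_unique_solution hn
    (hTn.contDiffAt (isOpen_openSig2.mem_nhds hz)) ?_ (hT.levelCurve_spec hp).2
    (isOpen_openSig2.mem_nhds hz) ?_
  · have := abs_le.1 (hT.abs_px_sub_one_le _ hz)
    linarith
  · filter_upwards [(isOpen_levelDomain T).mem_nhds hp] with q hq x hx hxq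
    exact hT.eq_levelCurve hq hx.1 hxq

theorem abs_partials_levelCurve_le {p : ℝ × ℝ} (hp : p ∈ levelDomain T)
    (hdiff : DifferentiableAt ℝ (levelCurve T) p) :
    |py (levelCurve T) p| ≤ 1 / 1000 ∧ |px (levelCurve T) p - 1| ≤ 1 / 1000 := by
  have hz := hT.mem_openSig2_levelCurve hp
  obtain ⟨hx, hy⟩ := partials_of_eventually_solution (hT.differentiableAt hz) hdiff
    (by filter_upwards [(isOpen_levelDomain T).mem_nhds hp] with q hq
          using (hT.levelCurve_spec hq).2)
  have ha := abs_le.1 (hT.abs_px_sub_one_le _ hz)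
  have hb := abs_le.1 (hT.abs_py_le _ hz)
  exact ⟨abs_le.2 ⟨by nlinarith, by nlinarith⟩, abs_le.2 ⟨by nlinarith, by nlinarith⟩⟩

theorem injOn_levelCurve : InjOn (fun p => (levelCurve T p, p.2)) (levelDomain T) :=
  fun p hp q hq (hpq : (levelCurve T p, p.2) = (levelCurve T q, q.2)) => Prod.ext
    (by rw [← (hT.levelCurve_spec hp).2, ← (hT.levelCurve_spec hq).2, hpq])
    (Prod.ext_iff.1 hpq).2

theorem Sig_subset_image_levelCurve : Sig ⊆ (fun p => (levelCurve T p, p.2)) '' levelRect T := by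
  intro w hw
  have hp : (T w, w.2) ∈ levelRect T := ⟨hT.mem_Icc_of_mem_Sig hw, hw.1.2, hw.2.2⟩
  refine ⟨(T w, w.2), hp, Prod.ext ?_ rfl⟩
  exact (hT.eq_levelCurve (levelRect_subset_levelDomain T hp) (Sig_subset_openSig2 hw).1 rfl).symm

theorem image_levelCurve_subset_Sig2 : (fun p => (levelCurve T p, p.2)) '' levelRect T ⊆ Sig2 := by
  rintro _ ⟨p, hp, rfl⟩
  exact openSig2_subset_Sig2 (hT.mem_openSig2_levelCurve (levelRect_subset_levelDomain T hp))

theorem exists_fibration {n : WithTop ℕ∞} (hn : n ≠ 0) (hTn : ContDiffOn ℝ n T openSig2) :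
    ∃ h : ℝ × ℝ → ℝ, ContDiffOn ℝ n h (levelRect T) ∧ (∀ p ∈ levelRect T, T (h p, p.2) = p.1) ∧
      InjOn (fun p => (h p, p.2)) (levelRect T) ∧ Sig ⊆ (fun p => (h p, p.2)) '' levelRect T ∧
      (fun p => (h p, p.2)) '' levelRect T ⊆ Sig2 ∧
      ∀ p ∈ levelRect T, |deriv (fun s => h (p.1, s)) p.2| ≤ 1 / 1000 ∧
        |deriv (fun s => h (s, p.2)) p.1 - 1| ≤ 1 / 1000 := by
  have hR := levelRect_subset_levelDomain T
  have hsmooth := fun p (hp : p ∈ levelRect T) => hT.contDiffAt_levelCurve hn hTn (hR hp)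
  exact ⟨levelCurve T, fun p hp => (hsmooth p hp).contDiffWithinAt,
    fun p hp => (hT.levelCurve_spec (hR hp)).2, hT.injOn_levelCurve.mono hR,
    hT.Sig_subset_image_levelCurve, hT.image_levelCurve_subset_Sig2,
    fun p hp => hT.abs_partials_levelCurve_le (hR hp) ((hsmooth p hp).differentiableAt hn)⟩

end NearFst

/-- Level-curve fibration: there is a `C^{M-1}` function `h` on `[α,β] × [-1,1]`
(`α, β` the min and max of `t_{z₁}` on `Σ`) with `t_{z₁}(h(v,y), y) = v`, such that
`(v,y) ↦ (h(v,y), y)` is an injective `C^{M-1}` map whose image `Σ_{z₁}` satisfies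
`Σ ⊆ Σ_{z₁} ⊆ 2Σ`, and `|h_y| ≤ 10⁻³`, `|h_v − 1| ≤ 10⁻³`. -/
theorem level_curve_fibration
    (M : ℕ) (hM : 3 ≤ M)
    (φ : ℝ × ℝ → ℝ) (hφ : Hyp M φ) (z₁ : ℝ × ℝ) (hz₁ : z₁ ∈ Sig) :
    ∃ h : ℝ × ℝ → ℝ,
      ContDiffOn ℝ (M - 1) h
        (Set.Icc (sInf (tfun φ z₁ '' Sig)) (sSup (tfun φ z₁ '' Sig)) ×ˢ Set.Icc (-1 : ℝ) 1) ∧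
      (∀ p ∈ Set.Icc (sInf (tfun φ z₁ '' Sig)) (sSup (tfun φ z₁ '' Sig)) ×ˢ
          Set.Icc (-1 : ℝ) 1,
        tfun φ z₁ (h p, p.2) = p.1) ∧
      Set.InjOn (fun p => (h p, p.2))
        (Set.Icc (sInf (tfun φ z₁ '' Sig)) (sSup (tfun φ z₁ '' Sig)) ×ˢ Set.Icc (-1 : ℝ) 1) ∧
      Sig ⊆ (fun p => (h p, p.2)) ''
        (Set.Icc (sInf (tfun φ z₁ '' Sig)) (sSup (tfun φ z₁ '' Sig)) ×ˢ Set.Icc (-1 : ℝ) 1) ∧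
      (fun p => (h p, p.2)) ''
        (Set.Icc (sInf (tfun φ z₁ '' Sig)) (sSup (tfun φ z₁ '' Sig)) ×ˢ Set.Icc (-1 : ℝ) 1)
        ⊆ Sig2 ∧
      (∀ p ∈ Set.Icc (sInf (tfun φ z₁ '' Sig)) (sSup (tfun φ z₁ '' Sig)) ×ˢ
          Set.Icc (-1 : ℝ) 1,
        |deriv (fun s => h (p.1, s)) p.2| ≤ 1 / 1000 ∧
        |deriv (fun s => h (s, p.2)) p.1 - 1| ≤ 1 / 1000) := by
  have hn : ((M - 1 : ℕ) : WithTop ℕ∞) ≠ 0 := by exact_mod_cast (by omega : M - 1 ≠ 0)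
  exact (hφ.nearFst_tfun hM (Sig_subset_openSig2 hz₁)).exists_fibration hn (hφ.contDiffOn_tfun hM)
end

section
/- Let g ∈ C^r(I,ℝ) on a compact interval I with ‖g'‖_∞ ≤ 1, let C > 0, and let 0 < λ ≤ ‖g‖_∞ with Cλ ≤ |I|. Then there is a finite family of pairwise disjoint open intervals I_{λ,i} (i ∈ 𝓘_λ), each of length at least Cλ, with |𝓘_λ| ≤ 30 r (1 + |I| ‖g^{(r)}‖_∞^{1/r} λ^{-1/r}), such that the union V_λ of the intervals satisfies {t ∈ I : |g(t)| < λ} ⊆ V_λ ⊆ {t ∈ I : |g(t)| < (8+C)λ}. -/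
/-!
On a mesh of `N ≈ |I| (C_r / λ)^{1/r}` equal pieces, the Taylor polynomial `Q_k` of degree `< r`
at the left end of the `k`-th piece is `λ`-close to `g`. The sets `{|Q_k| < 2λ}` cover
`{|g| < λ}`, lie inside `{|g| < 3λ}`, and each of their components begins at the left end of its
piece or at a root of `Q_k² - 4λ²`, so there are at most `2rN` of them. Thickening their union by
`Cλ` inside `I` merges components, makes each of them at least `Cλ` long, and costs at most `Cλ`
in the value of `g` since `g` is `1`-Lipschitz.
-/

open Set Polynomial

theorem iteratedDerivWithin_subset {𝕜 F : Type*} [NontriviallyNormedField 𝕜]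
    [NormedAddCommGroup F] [NormedSpace 𝕜 F] {f : 𝕜 → F} {s t : Set 𝕜} {x : 𝕜} {n : ℕ}
    (st : s ⊆ t) (hs : UniqueDiffOn 𝕜 s) (ht : UniqueDiffOn 𝕜 t) (h : ContDiffOn 𝕜 n f t)
    (hx : x ∈ s) : iteratedDerivWithin n f s x = iteratedDerivWithin n f t x := by
  simp only [iteratedDerivWithin_eq_iteratedFDerivWithin, iteratedFDerivWithin_subset st hs ht h hx]

theorem exists_natDegree_le_eval_eq_taylorWithinEval (f : ℝ → ℝ) (n : ℕ) (s : Set ℝ) (t : ℝ) :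
    ∃ Q : ℝ[X], Q.natDegree ≤ n ∧ ∀ x, Q.eval x = taylorWithinEval f n s t x := by
  refine ⟨∑ k ∈ Finset.range (n + 1),
    C ((k.factorial : ℝ)⁻¹ * iteratedDerivWithin k f s t) * (X - C t) ^ k, ?_, fun x => ?_⟩
  · refine natDegree_sum_le_of_forall_le _ _ fun k hk => ?_
    refine (natDegree_C_mul_le _ _).trans ((natDegree_pow_le).trans ?_)
    rw [natDegree_X_sub_C, mul_one]
    exact Nat.lt_succ_iff.mp (Finset.mem_range.mp hk)
  · simp only [taylor_within_apply, eval_finsetSum, eval_mul, eval_pow, eval_sub, eval_X, eval_C,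
      smul_eq_mul]
    exact Finset.sum_congr rfl fun _ _ => by ring

theorem exists_taylor_polynomial_abs_sub_le {g : ℝ → ℝ} {a b t t' Cr : ℝ} {r : ℕ} (hr : 1 ≤ r)
    (hat : a ≤ t) (htt' : t < t') (ht'b : t' ≤ b) (hg : ContDiffOn ℝ r g (Icc a b))
    (hCr : ∀ y ∈ Icc a b, |iteratedDerivWithin r g (Icc a b) y| ≤ Cr) :
    ∃ Q : ℝ[X], Q.natDegree < r ∧ ∀ y ∈ Icc t t', |g y - Q.eval y| ≤ Cr * (t' - t) ^ r := by
  obtain ⟨n, rfl⟩ := Nat.exists_eq_add_of_le' hr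
  obtain ⟨Q, hQdeg, hQ⟩ := exists_natDegree_le_eval_eq_taylorWithinEval g n (Icc t b) t
  have htb := htt'.trans_le ht'b
  have hsub : Icc t b ⊆ Icc a b := Icc_subset_Icc_left hat
  refine ⟨Q, Nat.lt_succ_of_le hQdeg, fun y hy => ?_⟩
  have hyb : y ∈ Icc t b := ⟨hy.1, hy.2.trans ht'b⟩
  have hCr' : ∀ z ∈ Icc t b, ‖iteratedDerivWithin (n + 1) g (Icc t b) z‖ ≤ Cr := fun z hz => by
    rw [Real.norm_eq_abs, iteratedDerivWithin_subset hsub (uniqueDiffOn_Icc htb)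
      (uniqueDiffOn_Icc (hat.trans_lt htb)) hg hz]
    exact hCr z (hsub hz)
  have hCr0 : 0 ≤ Cr := (abs_nonneg _).trans (hCr t (hsub (left_mem_Icc.mpr htb.le)))
  have htaylor := taylor_mean_remainder_bound htb.le (by exact_mod_cast hg.mono hsub) hyb hCr'
  rw [Real.norm_eq_abs, ← hQ] at htaylor
  calc |g y - Q.eval y| ≤ Cr * (y - t) ^ (n + 1) / n.factorial := htaylor
    _ ≤ Cr * (y - t) ^ (n + 1) :=
      div_le_self (mul_nonneg hCr0 (pow_nonneg (sub_nonneg.mpr hy.1) _))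
        (mod_cast n.factorial_pos)
    _ ≤ Cr * (t' - t) ^ (n + 1) := by
      gcongr
      · linarith [hy.1]
      · exact hy.2

theorem mul_pow_le_of_mul_rpow_le {Cr lam ℓ : ℝ} {r : ℕ} (hr : r ≠ 0) (hCr : 0 ≤ Cr)
    (hlam : 0 ≤ lam) (hℓ : 0 ≤ ℓ) (h : ℓ * Cr ^ ((1 : ℝ) / r) ≤ lam ^ ((1 : ℝ) / r)) :
    Cr * ℓ ^ r ≤ lam := by
  have hpow := pow_le_pow_left₀ (by positivity) h r
  rwa [mul_pow, one_div, Real.rpow_inv_natCast_pow hCr hr, Real.rpow_inv_natCast_pow hlam hr,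
    mul_comm] at hpow

theorem exists_piecewise_polynomial_approx {g : ℝ → ℝ} {a b Cr lam : ℝ} {r : ℕ} (hab : a < b)
    (hr : 1 ≤ r) (hg : ContDiffOn ℝ r g (Icc a b))
    (hCr : ∀ y ∈ Icc a b, |iteratedDerivWithin r g (Icc a b) y| ≤ Cr) (hlam : 0 < lam) :
    ∃ (N : ℕ) (t : ℕ → ℝ) (Q : ℕ → ℝ[X]), 0 < N ∧
      (N : ℝ) ≤ (b - a) * Cr ^ ((1 : ℝ) / r) * lam ^ (-(1 : ℝ) / r) + 2 ∧
      Monotone t ∧ t 0 = a ∧ t N = b ∧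
      ∀ k < N, (Q k).natDegree < r ∧ ∀ y ∈ Icc (t k) (t (k + 1)), |g y - (Q k).eval y| ≤ lam := by
  have hCr0 : 0 ≤ Cr := (abs_nonneg _).trans (hCr a (left_mem_Icc.mpr hab.le))
  set X := (b - a) * Cr ^ ((1 : ℝ) / r) * lam ^ (-(1 : ℝ) / r) with hXdef
  have hX0 : 0 ≤ X := by
    have := sub_pos.mpr hab
    positivity
  set N := ⌈X⌉₊ + 1
  have hN : (0 : ℝ) < N := by positivity
  have hXN : X ≤ N := (Nat.le_ceil X).trans (by simp [N])
  set L := (b - a) / N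
  have hL : 0 < L := div_pos (sub_pos.mpr hab) hN
  have hmesh : Cr * L ^ r ≤ lam := by
    refine mul_pow_le_of_mul_rpow_le (by omega) hCr0 hlam.le hL.le ?_
    have hX : (b - a) * Cr ^ ((1 : ℝ) / r) = X * lam ^ ((1 : ℝ) / r) := by
      rw [hXdef, neg_div, Real.rpow_neg hlam.le, inv_mul_cancel_right₀ (by positivity)]
    rw [div_mul_eq_mul_div, hX, div_le_iff₀ hN, mul_comm]
    exact mul_le_mul_of_nonneg_left hXN (by positivity)
  set t : ℕ → ℝ := fun k => a + k * L
  have hstep : ∀ k, t (k + 1) - t k = L := fun k => by simp only [t]; push_cast; ring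
  have hmono : Monotone t := fun i j hij => by simp only [t]; gcongr
  have htN : t N = b := by simp only [t, L]; field_simp; ring
  have hpiece : ∀ k < N, ∃ Q : ℝ[X], Q.natDegree < r ∧
      ∀ y ∈ Icc (t k) (t (k + 1)), |g y - Q.eval y| ≤ lam := fun k hk => by
    obtain ⟨Q, hQdeg, hQ⟩ := exists_taylor_polynomial_abs_sub_le (t := t k) (t' := t (k + 1)) hr
      (le_add_of_nonneg_right (by positivity)) (by linarith [hstep k]) (htN ▸ hmono hk) hg hCr
    exact ⟨Q, hQdeg, fun y hy => (hQ y hy).trans (by rwa [hstep])⟩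
  choose! Q hQ using hpiece
  have hNX : (N : ℝ) = ⌈X⌉₊ + 1 := by simp [N]
  exact ⟨N, t, Q, by positivity, by linarith [Nat.ceil_lt_add_one hX0], hmono, by simp [t], htN, hQ⟩

theorem exists_lt_mem_Icc_succ (t : ℕ → ℝ) {N : ℕ} {x : ℝ} (h0 : t 0 ≤ x) (hN : x ≤ t N)
    (hN0 : 0 < N) : ∃ k < N, x ∈ Icc (t k) (t (k + 1)) := by
  classical
  have hlast : x ≤ t (N - 1 + 1) := by rwa [Nat.sub_add_cancel hN0]
  have hex : ∃ k, x ≤ t (k + 1) := ⟨N - 1, hlast⟩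
  refine ⟨Nat.find hex, (Nat.find_le hlast).trans_lt (Nat.sub_lt hN0 one_pos), ?_,
    Nat.find_spec hex⟩
  by_cases hzero : Nat.find hex = 0
  · rwa [hzero]
  · obtain ⟨k, hk⟩ := Nat.exists_eq_succ_of_ne_zero hzero
    rw [hk]
    exact (not_le.mp (Nat.find_min hex (hk ▸ k.lt_succ_self))).le

theorem exists_left_endpoint_of_lt {f : ℝ → ℝ} {c t x : ℝ} (hf : ContinuousOn f (Icc t x))
    (htx : t ≤ x) (hx : f x < c) :
    ∃ s ∈ Icc t x, (s = t ∨ f s = c) ∧ ∀ y ∈ Ioc s x, f y < c := by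
  set B := Icc t x ∩ f ⁻¹' Ici c
  rcases B.eq_empty_or_nonempty with hB | hB
  · refine ⟨t, left_mem_Icc.mpr htx, Or.inl rfl, fun y hy => not_le.mp fun hcy => ?_⟩
    exact hB.subset ⟨Ioc_subset_Icc_self hy, hcy⟩
  have hBc : IsCompact B := isCompact_Icc.of_isClosed_subset
    (hf.preimage_isClosed_of_isClosed isClosed_Icc isClosed_Ici) inter_subset_left
  obtain ⟨⟨hts, hsx⟩, hcs⟩ : sSup B ∈ B := hBc.sSup_mem hB
  have hmax : ∀ y ∈ B, y ≤ sSup B := fun y hy => le_csSup hBc.bddAbove hy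
  refine ⟨sSup B, ⟨hts, hsx⟩, Or.inr ?_, fun y hy => not_le.mp fun hcy => ?_⟩
  · -- the value `c` is attained on `[sSup B, x]`, necessarily at its left end
    obtain ⟨z, hz, hfz⟩ := intermediate_value_Icc' hsx (hf.mono (Icc_subset_Icc_left hts))
      ⟨hx.le, hcs⟩
    have hzB : z ∈ B := ⟨⟨hts.trans hz.1, hz.2⟩, hfz.ge⟩
    rwa [le_antisymm (hmax z hzB) hz.1] at hfz
  · exact hy.1.not_ge (hmax y ⟨⟨hts.trans hy.1.le, hy.2⟩, hcy⟩)

noncomputable def leftEndpointCandidates (Q : ℝ[X]) (c t : ℝ) : Finset ℝ :=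
  insert t (Q ^ 2 - C (c ^ 2)).roots.toFinset

theorem card_leftEndpointCandidates_le (Q : ℝ[X]) (c t : ℝ) :
    (leftEndpointCandidates Q c t).card ≤ 2 * Q.natDegree + 1 := by
  refine (Finset.card_insert_le _ _).trans (Nat.succ_le_succ ?_)
  refine (Multiset.toFinset_card_le _).trans ((card_roots' _).trans ?_)
  refine (natDegree_sub_le _ _).trans (max_le ?_ (by simp))
  exact natDegree_pow_le.trans (by rw [mul_comm])

theorem exists_mem_leftEndpointCandidates {Q : ℝ[X]} {c t t' x : ℝ}
    (hx : x ∈ {y ∈ Icc t t' | |Q.eval y| < c}) :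
    ∃ s ∈ leftEndpointCandidates Q c t, s ≤ x ∧ Ioc s x ⊆ {y ∈ Icc t t' | |Q.eval y| < c} := by
  obtain ⟨⟨htx, hxt'⟩, hQx⟩ := hx
  obtain ⟨s, ⟨hts, hsx⟩, hs, hlt⟩ :=
    exists_left_endpoint_of_lt (Q.continuous.abs.continuousOn) htx hQx
  refine ⟨s, ?_, hsx, fun y hy => ⟨⟨hts.trans hy.1.le, hy.2.trans hxt'⟩, hlt y hy⟩⟩
  rcases hs with rfl | hs
  · exact Finset.mem_insert_self _ _
  refine Finset.mem_insert_of_mem (Multiset.mem_toFinset.mpr (mem_roots'.mpr ⟨?_, ?_⟩))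
  · intro h0
    have := congrArg (eval x) h0
    simp only [eval_sub, eval_pow, eval_C, eval_zero, sub_eq_zero, ← sq_abs (eval x Q)] at this
    exact (pow_lt_pow_left₀ hQx (abs_nonneg _) two_ne_zero).ne this
  · simp [← sq_abs (eval s Q), hs]

theorem exists_sublevel_cover_of_piecewise_approx {g : ℝ → ℝ} {t : ℕ → ℝ} (ht : Monotone t)
    {N r : ℕ} (hN : 0 < N) {Q : ℕ → ℝ[X]} {lam : ℝ}
    (hQ : ∀ k < N, (Q k).natDegree < r ∧ ∀ y ∈ Icc (t k) (t (k + 1)), |g y - (Q k).eval y| ≤ lam) :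
    ∃ (S : Set ℝ) (F : Finset ℝ), F.card ≤ N * (2 * r) ∧
      {y ∈ Icc (t 0) (t N) | |g y| < lam} ⊆ S ∧ S ⊆ Icc (t 0) (t N) ∧
      (∀ y ∈ S, |g y| < 3 * lam) ∧ ∀ x ∈ S, ∃ s ∈ F, s ≤ x ∧ Ioc s x ⊆ S := by
  set U : ℕ → Set ℝ := fun k => {y ∈ Icc (t k) (t (k + 1)) | |(Q k).eval y| < 2 * lam}
  refine ⟨⋃ k ∈ Finset.range N, U k,
    (Finset.range N).biUnion fun k => leftEndpointCandidates (Q k) (2 * lam) (t k),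
    ?_, ?_, ?_, ?_, ?_⟩
  · refine Finset.card_biUnion_le.trans
      ((Finset.sum_le_card_nsmul _ _ (2 * r) fun k hk => ?_).trans ?_)
    · have := (hQ k (Finset.mem_range.mp hk)).1
      exact (card_leftEndpointCandidates_le _ _ _).trans (by omega)
    · simp
  · rintro y ⟨⟨h0y, hyN⟩, hgy⟩
    obtain ⟨k, hk, hyk⟩ := exists_lt_mem_Icc_succ t h0y hyN hN
    refine mem_biUnion (Finset.mem_range.mpr hk) ⟨hyk, ?_⟩
    linarith [abs_sub_abs_le_abs_sub ((Q k).eval y) (g y), abs_sub_comm (g y) ((Q k).eval y),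
      (hQ k hk).2 y hyk]
  · simp only [iUnion_subset_iff]
    intro k hk y hy
    exact ⟨(ht (Nat.zero_le k)).trans hy.1.1, hy.1.2.trans (ht (Finset.mem_range.mp hk))⟩
  · simp only [mem_iUnion]
    rintro y ⟨k, hk, hyk, hQy⟩
    linarith [abs_sub_abs_le_abs_sub (g y) ((Q k).eval y), (hQ k (Finset.mem_range.mp hk)).2 y hyk]
  · simp only [mem_iUnion]
    rintro x ⟨k, hk, hxk⟩
    obtain ⟨s, hs, hsx, hIoc⟩ := exists_mem_leftEndpointCandidates hxk
    exact ⟨s, Finset.mem_biUnion.mpr ⟨k, hk, hs⟩, hsx, fun z hz => mem_biUnion hk (hIoc hz)⟩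

theorem exists_fin_eq_connectedComponentIn {α : Type*} [TopologicalSpace α] {V : Set α}
    (F : Finset α) (hF : ∀ x ∈ V, ∃ s ∈ F, s ∈ connectedComponentIn V x) :
    ∃ (n : ℕ) (J : Fin n → Set α), n ≤ F.card ∧ (∀ i, ∃ x ∈ V, J i = connectedComponentIn V x) ∧
      Pairwise (Function.onFun Disjoint J) ∧ ⋃ i, J i = V := by
  classical
  set 𝒞 := (F.filter (· ∈ V)).image (connectedComponentIn V)
  have hmem : ∀ i, ∃ x ∈ V, (𝒞.equivFin.symm i : Set α) = connectedComponentIn V x := fun i => by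
    obtain ⟨x, hx, hxi⟩ := Finset.mem_image.mp (𝒞.equivFin.symm i).2
    exact ⟨x, (Finset.mem_filter.mp hx).2, hxi.symm⟩
  refine ⟨𝒞.card, fun i => 𝒞.equivFin.symm i,
    Finset.card_image_le.trans (Finset.card_filter_le _ _), hmem,
    fun i j hij => Set.disjoint_left.mpr fun z (hzi : z ∈ (𝒞.equivFin.symm i : Set α))
      (hzj : z ∈ (𝒞.equivFin.symm j : Set α)) => hij ?_, ?_⟩
  · obtain ⟨x, -, hx⟩ := hmem i
    obtain ⟨y, -, hy⟩ := hmem j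
    rw [hx] at hzi
    rw [hy] at hzj
    refine 𝒞.equivFin.symm.injective (Subtype.ext ?_)
    rw [hx, hy, connectedComponentIn_eq hzi, connectedComponentIn_eq hzj]
  · refine subset_antisymm (iUnion_subset fun i => ?_) fun x hx => ?_
    · obtain ⟨x, -, hx⟩ := hmem i
      exact hx ▸ connectedComponentIn_subset V x
    obtain ⟨s, hsF, hsx⟩ := hF x hx
    have hsV : s ∈ V := connectedComponentIn_subset V x hsx
    have hs𝒞 : connectedComponentIn V s ∈ 𝒞 :=
      Finset.mem_image_of_mem _ (Finset.mem_filter.mpr ⟨hsF, hsV⟩)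
    refine mem_iUnion.mpr ⟨𝒞.equivFin ⟨_, hs𝒞⟩, ?_⟩
    rw [Equiv.symm_apply_apply, Subtype.coe_mk, ← connectedComponentIn_eq hsx]
    exact mem_connectedComponentIn hx

/-- Unlike `Metric.cthickening δ S ∩ I`, this contains no point whose distance `δ` to `S` is
not attained. -/
def cthickeningIn (I : Set ℝ) (δ : ℝ) (S : Set ℝ) : Set ℝ :=
  I ∩ ⋃ x ∈ S, Metric.closedBall x δ

section cthickeningIn

variable {a b δ : ℝ} {S : Set ℝ}

theorem closure_inter_subset_cthickeningIn {I : Set ℝ} (hδ : 0 < δ) :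
    closure S ∩ I ⊆ cthickeningIn I δ S := fun y ⟨hyS, hyI⟩ => by
  obtain ⟨x, hxS, hxy⟩ := Metric.mem_closure_iff.mp hyS δ hδ
  exact ⟨hyI, mem_biUnion hxS (Metric.mem_closedBall.mpr hxy.le)⟩

theorem abs_lt_of_mem_cthickeningIn {I : Set ℝ} {g : ℝ → ℝ} {μ : ℝ} (hg : LipschitzOnWith 1 g I)
    (hSI : S ⊆ I) (hS : ∀ x ∈ S, |g x| < μ) {y : ℝ} (hy : y ∈ cthickeningIn I δ S) :
    |g y| < μ + δ := by
  obtain ⟨hyI, hy⟩ := hy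
  obtain ⟨x, hxS, hxy⟩ := mem_iUnion₂.mp hy
  have hgxy : dist (g y) (g x) ≤ dist y x := by
    simpa using hg.dist_le_mul y hyI x (hSI hxS)
  rw [Metric.mem_closedBall] at hxy
  simp only [Real.dist_eq] at hgxy hxy
  linarith [abs_sub_abs_le_abs_sub (g y) (g x), hS x hxS]

theorem exists_mem_connectedComponentIn_cthickeningIn (hS : S ⊆ Icc a b) {y : ℝ}
    (hy : y ∈ cthickeningIn (Icc a b) δ S) :
    ∃ x ∈ S, x ∈ connectedComponentIn (cthickeningIn (Icc a b) δ S) y := by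
  obtain ⟨hyI, hy⟩ := hy
  obtain ⟨x, hxS, hxy⟩ := mem_iUnion₂.mp hy
  have hconn : IsPreconnected (Icc a b ∩ Metric.closedBall x δ) := by
    rw [Real.closedBall_eq_Icc, Icc_inter_Icc]
    exact isPreconnected_Icc
  have hsub : Icc a b ∩ Metric.closedBall x δ ⊆ cthickeningIn (Icc a b) δ S :=
    fun z hz => ⟨hz.1, mem_biUnion hxS hz.2⟩
  exact ⟨x, hxS, hconn.subset_connectedComponentIn ⟨hyI, hxy⟩ hsub
    ⟨hS hxS, Metric.mem_closedBall_self (dist_nonneg.trans hxy)⟩⟩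

theorem exists_Icc_subset_cthickeningIn (hδ : 0 ≤ δ) (hδab : δ ≤ b - a) {x : ℝ} (hxS : x ∈ S)
    (hx : x ∈ Icc a b) :
    ∃ u, x ∈ Icc u (u + δ) ∧ Icc u (u + δ) ⊆ cthickeningIn (Icc a b) δ S := by
  set u := max a (x - δ)
  have hau : a ≤ u := le_max_left _ _
  have hxu : x - δ ≤ u := le_max_right _ _
  have hux : u ≤ x := max_le hx.1 (by linarith)
  have hub : u ≤ b - δ := max_le (by linarith) (by linarith [hx.2])
  refine ⟨u, ⟨hux, by linarith⟩, fun z hz => ⟨⟨?_, ?_⟩, mem_biUnion hxS ?_⟩⟩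
  · linarith [hz.1]
  · linarith [hz.2]
  · rw [Real.closedBall_eq_Icc]
    constructor <;> linarith [hz.1, hz.2]

theorem exists_disjoint_ordConnected_cover_cthickeningIn (hδ : 0 < δ) (hδab : δ ≤ b - a)
    (hS : S ⊆ Icc a b) (F : Finset ℝ) (hF : ∀ x ∈ S, ∃ s ∈ F, s ≤ x ∧ Ioc s x ⊆ S) :
    ∃ (n : ℕ) (J : Fin n → Set ℝ), n ≤ F.card ∧ (∀ i, (J i).OrdConnected) ∧
      Pairwise (Function.onFun Disjoint J) ∧ (∀ i, ∃ u ∈ J i, ∃ w ∈ J i, δ ≤ w - u) ∧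
      ⋃ i, J i = cthickeningIn (Icc a b) δ S := by
  set V := cthickeningIn (Icc a b) δ S
  have hclosure : closure S ⊆ V := fun y hy =>
    closure_inter_subset_cthickeningIn hδ ⟨hy, closure_minimal hS isClosed_Icc hy⟩
  have hseed : ∀ x ∈ S, ∃ s ∈ F, s ∈ connectedComponentIn V x := fun x hx => by
    obtain ⟨s, hsF, hsx, hIoc⟩ := hF x hx
    have hIcc : Icc s x ⊆ closure S := by
      rcases hsx.eq_or_lt with rfl | hsx
      · simpa using subset_closure hx
      · exact closure_Ioc hsx.ne ▸ closure_mono hIoc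
    exact ⟨s, hsF, isPreconnected_Icc.subset_connectedComponentIn (right_mem_Icc.mpr hsx)
      (hIcc.trans hclosure) (left_mem_Icc.mpr hsx)⟩
  obtain ⟨n, J, hnF, hJ, hdisj, hJV⟩ := exists_fin_eq_connectedComponentIn F fun y hy => by
    obtain ⟨x, hxS, hxy⟩ := exists_mem_connectedComponentIn_cthickeningIn hS hy
    rw [connectedComponentIn_eq hxy]
    exact hseed x hxS
  refine ⟨n, J, hnF, fun i => ?_, hdisj, fun i => ?_, hJV⟩
  · obtain ⟨y, -, hy⟩ := hJ i
    exact hy ▸ isPreconnected_connectedComponentIn.ordConnected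
  · obtain ⟨y, hyV, hy⟩ := hJ i
    obtain ⟨x, hxS, hxy⟩ := exists_mem_connectedComponentIn_cthickeningIn hS hyV
    obtain ⟨u, hxu, huV⟩ := exists_Icc_subset_cthickeningIn hδ.le hδab hxS (hS hxS)
    have hsub : Icc u (u + δ) ⊆ J i := by
      rw [hy, connectedComponentIn_eq hxy]
      exact isPreconnected_Icc.subset_connectedComponentIn hxu huV
    exact ⟨u, hsub (left_mem_Icc.mpr (by linarith)), u + δ, hsub (right_mem_Icc.mpr (by linarith)),
      by linarith⟩

end cthickeningIn

theorem thick_sublevel_set_decomposition_general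
    (a b : ℝ) (r : ℕ) (hr : 1 ≤ r)
    (g : ℝ → ℝ) (hg : ContDiffOn ℝ r g (Icc a b))
    (hg' : ∀ t ∈ Icc a b, |derivWithin g (Icc a b) t| ≤ 1)
    (Cr : ℝ) (hCr : ∀ t ∈ Icc a b, |iteratedDerivWithin r g (Icc a b) t| ≤ Cr)
    (C : ℝ) (hC : 0 < C)
    (lam : ℝ) (hlam : 0 < lam)
    (hClam : C * lam ≤ b - a) :
    ∃ (n : ℕ) (J : Fin n → Set ℝ),
      (∀ i, (J i).OrdConnected) ∧
      Pairwise (Function.onFun Disjoint J) ∧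
      (∀ i, ∃ u ∈ J i, ∃ w ∈ J i, C * lam ≤ w - u) ∧
      ((n : ℝ) ≤ 30 * r * (1 + (b - a) * Cr ^ ((1 : ℝ) / r) * lam ^ (-(1 : ℝ) / r))) ∧
      {t ∈ Icc a b | |g t| < lam} ⊆ (⋃ i, J i) ∧
      (⋃ i, J i) ⊆ {t ∈ Icc a b | |g t| < (8 + C) * lam} := by
  have hδ : 0 < C * lam := mul_pos hC hlam
  have hab : a < b := by linarith
  obtain ⟨N, t, Q, hN, hNX, ht, ht0, htN, hQ⟩ :=
    exists_piecewise_polynomial_approx hab hr hg hCr hlam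
  obtain ⟨S, F, hF, hsub, hSI, hS3, hseed⟩ := exists_sublevel_cover_of_piecewise_approx ht hN hQ
  rw [ht0, htN] at hsub hSI
  obtain ⟨n, J, hnF, hJ, hdisj, hlen, hJV⟩ :=
    exists_disjoint_ordConnected_cover_cthickeningIn hδ hClam hSI F hseed
  have hLip : LipschitzOnWith 1 g (Icc a b) :=
    (convex_Icc a b).lipschitzOnWith_of_nnnorm_derivWithin_le
      (hg.differentiableOn (mod_cast (by omega : r ≠ 0))) fun x hx => by
        rw [← NNReal.coe_le_coe, coe_nnnorm, Real.norm_eq_abs]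
        exact hg' x hx
  refine ⟨n, J, hJ, hdisj, hlen, ?_, ?_, ?_⟩
  · have hCr0 : 0 ≤ Cr := (abs_nonneg _).trans (hCr a (left_mem_Icc.mpr hab.le))
    have hX : 0 ≤ (b - a) * Cr ^ ((1 : ℝ) / r) * lam ^ (-(1 : ℝ) / r) := by
      have := sub_pos.mpr hab
      positivity
    have hn : (n : ℝ) ≤ N * (2 * r) := by exact_mod_cast hnF.trans hF
    nlinarith
  · rw [hJV]
    exact fun y hy =>
      closure_inter_subset_cthickeningIn hδ ⟨subset_closure (hsub hy), hSI (hsub hy)⟩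
  · rw [hJV]
    exact fun y hy => ⟨hy.1, (abs_lt_of_mem_cthickeningIn hLip hSI hS3 hy).trans (by linarith)⟩

/-- Thickened sublevel-set decomposition: if in addition `‖g'‖_∞ ≤ 1` and `Cλ ≤ |I|`, the
sublevel set `{|g| < λ}` can be covered by at most `30 r (1 + |I| C_r^{1/r} λ^{-1/r})`
pairwise disjoint intervals, each of length at least `Cλ`, on which `|g| < (8+C)λ`. -/
theorem thick_sublevel_set_decomposition
    (a b : ℝ) (hab : a ≤ b) (r : ℕ) (hr : 1 ≤ r)
    (g : ℝ → ℝ) (hg : ContDiffOn ℝ r g (Icc a b))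
    (hg' : ∀ t ∈ Icc a b, |derivWithin g (Icc a b) t| ≤ 1)
    (Cr : ℝ) (hCr : ∀ t ∈ Icc a b, |iteratedDerivWithin r g (Icc a b) t| ≤ Cr)
    (C : ℝ) (hC : 0 < C)
    (lam : ℝ) (hlam : 0 < lam) (hlam' : ∃ t ∈ Icc a b, lam ≤ |g t|)
    (hClam : C * lam ≤ b - a) :
    ∃ (n : ℕ) (J : Fin n → Set ℝ),
      (∀ i, (J i).OrdConnected) ∧
      Pairwise (Function.onFun Disjoint J) ∧
      (∀ i, ∃ u ∈ J i, ∃ w ∈ J i, C * lam ≤ w - u) ∧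
      ((n : ℝ) ≤ 30 * r * (1 + (b - a) * Cr ^ ((1 : ℝ) / r) * lam ^ (-(1 : ℝ) / r))) ∧
      {t ∈ Icc a b | |g t| < lam} ⊆ (⋃ i, J i) ∧
      (⋃ i, J i) ⊆ {t ∈ Icc a b | |g t| < (8 + C) * lam} :=
  thick_sublevel_set_decomposition_general a b r hr g hg hg' Cr hCr C hC lam hlam hClam
end
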